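/- arXiv:1805.03863 — 6 statements merged into one kernel-verified Lean document; each statement's English description precedes it below -/
import Mathlib

section
/- For every composition s = (s(1),…,s(a)), the set of s-trees is in bijection with the set of complete noncrossing s-matchings; in particular these two sets have the same cardinality. -/
/-- A planar rooted tree: a root together with a (possibly empty) ordered list of subtrees. -/
inductive PTree : Type where
  | node : List PTree → PTree

namespace PTree

/-- The signature of a planar rooted tree: the numbers of children of its internal
nodes, listed in preorder. -/
def signature : PTree → List ℕ
  | node [] => []
  | node (t :: ts) =>
    (t :: ts).length :: ((t :: ts).attach.map (fun x => signature x.1)).flatten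
decreasing_by
  have := List.sizeOf_lt_of_mem x.2
  simp at this ⊢
  omega

/-- The preorder word of a planar rooted tree: `true` (= N) for each internal node and
`false` (= E) for each leaf, nodes listed in preorder. -/
def word : PTree → List Bool
  | node ts => (!ts.isEmpty) :: (ts.attach.map (fun x => word x.1)).flatten
decreasing_by
  have := List.sizeOf_lt_of_mem x.2
  simp at this ⊢
  omega

end PTree

/-- A finite partition is noncrossing if there are no `x < y < z < w` with `x, z` in one
block and `y, w` in a different block. -/
def Noncrossing {n : ℕ} (π : Finpartition (Finset.Icc 1 n)) : Prop :=
  ¬ ∃ B₁ ∈ π.parts, ∃ B₂ ∈ π.parts, B₁ ≠ B₂ ∧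
    ∃ x y z w : ℕ, x < y ∧ y < z ∧ z < w ∧ x ∈ B₁ ∧ z ∈ B₁ ∧ y ∈ B₂ ∧ w ∈ B₂

/-- `L` is the list of blocks of `π` ordered by increasing minima. -/
def SortedBlocks {n : ℕ} (π : Finpartition (Finset.Icc 1 n)) (L : List (Finset ℕ)) : Prop :=
  L.Nodup ∧ L.toFinset = π.parts ∧ L.Pairwise (fun B C => B.min < C.min)

/-- `sizes` is obtained from the composition `v` by summing adjacent entries,
i.e. `v` refines `sizes`. -/
def Refines (v sizes : List ℕ) : Prop :=
  ∃ chunks : List (List ℕ), (∀ c ∈ chunks, c ≠ []) ∧ chunks.flatten = v ∧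
    chunks.map List.sum = sizes

/-! Number the nodes of a planar tree `0, 1, …` in preorder. The sets of children of its
internal nodes, listed in preorder of the parents, partition `[1, |s|]` into blocks of sizes
`s(1), …, s(a)`. Their minima increase, since the first child of a node directly follows it,
and they do not cross, since every subtree occupies an interval of numbers.

Conversely, in a noncrossing partition of `[a, c)` sorted by minima, the first block contains
`a`, and no other block straddles the next element `b` of the first block. So the partition
splits into one of `(a, b)` and one of `[b, c)` (the first block minus `a`, followed by the
blocks beyond `b`); these are the partitions of the first subtree of the root and of the tree
formed by the remaining subtrees, which gives the inverse map by induction on `c - a`. -/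

theorem List.exists_eq_append_of_pairwise {α : Type*} {r : α → α → Prop} {p q : α → Prop}
    {l : List α} (hl : l.Pairwise r) (hpq : ∀ x ∈ l, p x ∨ q x)
    (hr : ∀ x ∈ l, ∀ y ∈ l, q x → p y → ¬r x y) :
    ∃ l₁ l₂, l = l₁ ++ l₂ ∧ (∀ x ∈ l₁, p x) ∧ ∀ x ∈ l₂, q x := by
  induction l with
  | nil => exact ⟨[], [], rfl, by simp, by simp⟩
  | cons x l ih =>
    rw [List.pairwise_cons] at hl
    by_cases hx : p x
    · obtain ⟨l₁, l₂, rfl, h₁, h₂⟩ := ih hl.2 (fun y hy => hpq y (.tail _ hy))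
        (fun y hy z hz => hr y (.tail _ hy) z (.tail _ hz))
      exact ⟨x :: l₁, l₂, rfl, List.forall_mem_cons.2 ⟨hx, h₁⟩, h₂⟩
    · have hqx := (hpq x List.mem_cons_self).resolve_left hx
      refine ⟨[], x :: l, rfl, by simp, List.forall_mem_cons.2 ⟨hqx, fun y hy => ?_⟩⟩
      exact (hpq y (.tail _ hy)).resolve_left
        fun hpy => hr x List.mem_cons_self y (.tail _ hy) hqx hpy (hl.1 y hy)

theorem List.append_inj_of_forall {α : Type*} {p : α → Prop} [DecidablePred p]
    {l₁ l₂ l₁' l₂' : List α} (h : l₁ ++ l₂ = l₁' ++ l₂') (h₁ : ∀ x ∈ l₁, p x)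
    (h₁' : ∀ x ∈ l₁', p x) (h₂ : ∀ x ∈ l₂, ¬p x) (h₂' : ∀ x ∈ l₂', ¬p x) :
    l₁ = l₁' ∧ l₂ = l₂' := by
  have filter_eq {l₁ l₂ : List α} (h₁ : ∀ x ∈ l₁, p x) (h₂ : ∀ x ∈ l₂, ¬p x) :
      (l₁ ++ l₂).filter p = l₁ := by
    rw [List.filter_append, List.filter_eq_self.2 (by simpa using h₁),
      List.filter_eq_nil_iff.2 (by simpa using h₂), List.append_nil]
  have hl₁ : l₁ = l₁' := by rw [← filter_eq h₁ h₂, h, filter_eq h₁' h₂']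
  exact ⟨hl₁, List.append_cancel_left (hl₁ ▸ h)⟩

def Crosses (B C : Finset ℕ) : Prop :=
  ∃ x y z w : ℕ, x < y ∧ y < z ∧ z < w ∧ x ∈ B ∧ z ∈ B ∧ y ∈ C ∧ w ∈ C

structure NCBefore (B C : Finset ℕ) : Prop where
  disjoint : Disjoint B C
  min_lt_min : B.min < C.min
  not_crosses : ¬Crosses B C
  not_crosses' : ¬Crosses C B

theorem min_lt_min_of_forall_lt {α : Type*} [LinearOrder α] {B C : Finset α} {x : α} (hx : x ∈ B)
    (hC : C.Nonempty) (h : ∀ y ∈ C, x < y) : B.min < C.min := by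
  rw [← Finset.coe_min' hC]
  exact (Finset.min_le hx).trans_lt (WithTop.coe_lt_coe.2 ((Finset.lt_min'_iff C hC).2 h))

theorem ncBefore_of_forall_lt {B C : Finset ℕ} (hB : B.Nonempty) (hC : C.Nonempty)
    (h : ∀ x ∈ B, ∀ y ∈ C, x < y) : NCBefore B C where
  disjoint := Finset.disjoint_left.2 fun x hxB hxC => lt_irrefl x (h x hxB x hxC)
  min_lt_min := min_lt_min_of_forall_lt hB.choose_spec hC (h _ hB.choose_spec)
  not_crosses := fun ⟨_, y, z, _, _, hyz, _, _, hz, hy, _⟩ => (h z hz y hy).asymm hyz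
  not_crosses' := fun ⟨x, y, _, _, hxy, _, _, hx, _, hy, _⟩ => (h y hy x hx).asymm hxy

theorem ncBefore_of_gap {B C : Finset ℕ} {a p q : ℕ} (ha : a ∈ B) (hap : a ≤ p)
    (hB : ∀ x ∈ B, x ≤ p ∨ q ≤ x) (hC : C.Nonempty) (hCpq : ∀ y ∈ C, p < y ∧ y < q) :
    NCBefore B C where
  disjoint := Finset.disjoint_left.2 fun x hxB hxC => by
    have := hB x hxB; have := hCpq x hxC; omega
  min_lt_min := min_lt_min_of_forall_lt ha hC fun y hy => by have := hCpq y hy; omega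
  not_crosses := fun ⟨_, y, z, w, _, hyz, hzw, _, hz, hy, hw⟩ => by
    have := hB z hz; have := hCpq y hy; have := hCpq w hw; omega
  not_crosses' := fun ⟨x, y, z, _, hxy, hyz, _, hx, hz, hy, _⟩ => by
    have := hB y hy; have := hCpq x hx; have := hCpq z hz; omega

theorem NCBefore.mono_left {R R' C : Finset ℕ} (h : NCBefore R C) (hR' : R' ⊆ R)
    (hmin : R'.min < C.min) : NCBefore R' C where
  disjoint := h.disjoint.mono_left hR'
  min_lt_min := hmin
  not_crosses := fun ⟨x, y, z, w, h₁, h₂, h₃, hx, hz, hy, hw⟩ =>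
    h.not_crosses ⟨x, y, z, w, h₁, h₂, h₃, hR' hx, hR' hz, hy, hw⟩
  not_crosses' := fun ⟨x, y, z, w, h₁, h₂, h₃, hx, hz, hy, hw⟩ =>
    h.not_crosses' ⟨x, y, z, w, h₁, h₂, h₃, hx, hz, hR' hy, hR' hw⟩

theorem NCBefore.insert_left {R C : Finset ℕ} {a : ℕ} (h : NCBefore R C)
    (hC : ∀ y ∈ C, a < y) : NCBefore (insert a R) C where
  disjoint := Finset.disjoint_insert_left.2 ⟨fun ha => lt_irrefl a (hC a ha), h.disjoint⟩
  min_lt_min := by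
    rw [Finset.min_insert]
    exact (min_le_right _ _).trans_lt h.min_lt_min
  not_crosses := by
    rintro ⟨x, y, z, w, hxy, hyz, hzw, hx, hz, hy, hw⟩
    have hzR : z ∈ R := (Finset.mem_insert.1 hz).resolve_left (by have := hC y hy; omega)
    -- if `x = a`, the least element of `R` takes its place
    have hR : R.Nonempty := ⟨z, hzR⟩
    have hmin : R.min' hR < y := by
      have := h.min_lt_min.trans_le (Finset.min_le hy)
      rwa [← Finset.coe_min' hR, WithTop.coe_lt_coe] at this
    exact h.not_crosses ⟨_, y, z, w, hmin, hyz, hzw, R.min'_mem hR, hzR, hy, hw⟩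
  not_crosses' := by
    rintro ⟨x, y, z, w, hxy, hyz, hzw, hx, hz, hy, hw⟩
    have ha : a < x := hC x hx
    exact h.not_crosses' ⟨x, y, z, w, hxy, hyz, hzw, hx, hz,
      (Finset.mem_insert.1 hy).resolve_left (by omega),
      (Finset.mem_insert.1 hw).resolve_left (by omega)⟩

/-- `L` lists the blocks of a noncrossing partition of `[a, b)` by increasing minima. -/
structure IsNCBlocks (a b : ℕ) (L : List (Finset ℕ)) : Prop where
  le : a ≤ b
  exists_mem_iff : ∀ x, (∃ B ∈ L, x ∈ B) ↔ a ≤ x ∧ x < b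
  nonempty : ∀ B ∈ L, B.Nonempty
  pairwise : L.Pairwise NCBefore

def graft (a : ℕ) : List (Finset ℕ) → List (Finset ℕ) → List (Finset ℕ)
  | L, [] => {a} :: L
  | L, R :: F => insert a R :: (L ++ F)

theorem graft_ne_nil (a : ℕ) (L M : List (Finset ℕ)) : graft a L M ≠ [] := by
  cases M <;> simp [graft]

namespace IsNCBlocks

variable {a b c : ℕ} {L M : List (Finset ℕ)} {R : Finset ℕ}

theorem bounds (h : IsNCBlocks a b L) {B : Finset ℕ} (hB : B ∈ L) {x : ℕ} (hx : x ∈ B) :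
    a ≤ x ∧ x < b :=
  (h.exists_mem_iff x).1 ⟨B, hB, hx⟩

theorem nil (a : ℕ) : IsNCBlocks a a [] :=
  ⟨le_rfl, fun x => by simp only [List.not_mem_nil, false_and, exists_false, false_iff]; omega,
    by simp, List.Pairwise.nil⟩

theorem eq_of_nil (h : IsNCBlocks a b []) : b = a := by
  have := h.le
  have := h.exists_mem_iff a
  simp only [List.not_mem_nil, false_and, exists_false, false_iff, not_and, not_lt] at this
  omega

theorem mem_head (h : IsNCBlocks a b (R :: L)) : a ∈ R := by
  obtain ⟨x, hx⟩ := h.nonempty R List.mem_cons_self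
  have hx := h.bounds List.mem_cons_self hx
  obtain ⟨C, hC, haC⟩ := (h.exists_mem_iff a).2 ⟨le_rfl, by omega⟩
  rcases List.mem_cons.1 hC with rfl | hC
  · exact haC
  · have hR : (a : WithTop ℕ) ≤ R.min :=
      Finset.le_min fun _ hy => WithTop.coe_le_coe.2 (h.bounds List.mem_cons_self hy).1
    exact absurd ((List.rel_of_pairwise_cons h.pairwise hC).min_lt_min.trans_le
      (Finset.min_le haC)) (not_lt.2 hR)

theorem min_head (h : IsNCBlocks a b (R :: L)) : R.min = a :=
  le_antisymm (Finset.min_le h.mem_head)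
    (Finset.le_min fun _ hy => WithTop.coe_le_coe.2 (h.bounds List.mem_cons_self hy).1)

theorem lt_of_mem_tail (h : IsNCBlocks a b (R :: L)) {C : Finset ℕ} (hC : C ∈ L) {x : ℕ}
    (hx : x ∈ C) : a < x ∧ x < b := by
  have hxa : x ≠ a := fun hxa => Finset.disjoint_left.1
    (List.rel_of_pairwise_cons h.pairwise hC).disjoint h.mem_head (hxa ▸ hx)
  have := h.bounds (List.mem_cons_of_mem R hC) hx
  omega

theorem singleton_cons (hL : IsNCBlocks (a + 1) b L) : IsNCBlocks a b ({a} :: L) := by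
  have := hL.le
  refine ⟨by omega, fun x => ?_, ?_, ?_⟩
  · simp only [List.mem_cons, exists_eq_or_imp, Finset.mem_singleton, hL.exists_mem_iff]
    constructor <;> intro <;> omega
  · simpa using hL.nonempty
  · refine List.Pairwise.cons (fun C hC => ?_) hL.pairwise
    exact ncBefore_of_forall_lt (Finset.singleton_nonempty a) (hL.nonempty C hC)
      fun x hx y hy => by rw [Finset.mem_singleton.1 hx]; exact (hL.bounds hC hy).1

theorem insert_cons_append {F : List (Finset ℕ)} (hL : IsNCBlocks (a + 1) b L)
    (hM : IsNCBlocks b c (R :: F)) : IsNCBlocks a c (insert a R :: (L ++ F)) := by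
  have := hL.le
  have := hM.le
  refine ⟨by omega, fun x => ?_, ?_, ?_⟩
  · have hMx := hM.exists_mem_iff x
    simp only [List.mem_cons, exists_eq_or_imp] at hMx ⊢
    simp only [Finset.mem_insert, List.mem_append, or_and_right, exists_or, hL.exists_mem_iff]
    rw [or_assoc, or_left_comm (a := x ∈ R), hMx]
    constructor <;> intro <;> omega
  · simp only [List.mem_cons, List.mem_append]
    rintro B (rfl | hB | hB)
    · exact Finset.insert_nonempty a R
    · exact hL.nonempty B hB
    · exact hM.nonempty B (.tail R hB)
  · have hF := List.pairwise_cons.1 hM.pairwise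
    refine List.Pairwise.cons (fun C hC => ?_) (List.pairwise_append.2
      ⟨hL.pairwise, hF.2, fun B hB C hC => ?_⟩)
    · rcases List.mem_append.1 hC with hC | hC
      · refine ncBefore_of_gap (Finset.mem_insert_self a R) le_rfl (q := b) (fun y hy => ?_)
          (hL.nonempty C hC) fun y hy => ?_
        · rcases Finset.mem_insert.1 hy with rfl | hy
          · exact Or.inl le_rfl
          · exact Or.inr (hM.bounds List.mem_cons_self hy).1
        · have := hL.bounds hC hy; omega
      · exact (hF.1 C hC).insert_left fun y hy => by have := hM.lt_of_mem_tail hC hy; omega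
    · exact ncBefore_of_forall_lt (hL.nonempty B hB) (hM.nonempty C (.tail R hC))
        fun x hx y hy => by have := hL.bounds hB hx; have := hM.lt_of_mem_tail hC hy; omega

end IsNCBlocks

theorem isNCBlocks_graft {a b c : ℕ} {L M : List (Finset ℕ)} (hL : IsNCBlocks (a + 1) b L)
    (hM : IsNCBlocks b c M) : IsNCBlocks a c (graft a L M) := by
  cases M with
  | nil => obtain rfl := hM.eq_of_nil; exact hL.singleton_cons
  | cons R F => exact hL.insert_cons_append hM

namespace IsNCBlocks

variable {a b c : ℕ} {L L₁ L₂ : List (Finset ℕ)} {R : Finset ℕ}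

theorem forall_lt_or_forall_gt (h : IsNCBlocks a c (R :: L)) (hbR : b ∈ R) {C : Finset ℕ}
    (hC : C ∈ L) : (∀ x ∈ C, x < b) ∨ ∀ x ∈ C, b < x := by
  have hRC := List.rel_of_pairwise_cons h.pairwise hC
  have hbC : b ∉ C := Finset.disjoint_left.1 hRC.disjoint hbR
  by_contra! hcross
  obtain ⟨⟨w, hw, hbw⟩, ⟨y, hy, hyb⟩⟩ := hcross
  have hay := (h.lt_of_mem_tail hC hy).1
  have hyb : y < b := lt_of_le_of_ne hyb fun e => hbC (e ▸ hy)
  have hbw : b < w := lt_of_le_of_ne hbw fun e => hbC (e ▸ hw)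
  exact hRC.not_crosses ⟨a, y, b, w, hay, hyb, hbw, h.mem_head, hbR, hy, hw⟩

theorem of_cons_append_left (h : IsNCBlocks a c (R :: (L₁ ++ L₂))) (hab : a < b) (hbc : b ≤ c)
    (hR : ∀ x ∈ R, x = a ∨ b ≤ x) (hL₁ : ∀ C ∈ L₁, ∀ x ∈ C, x < b)
    (hL₂ : ∀ C ∈ L₂, ∀ x ∈ C, b ≤ x) : IsNCBlocks (a + 1) b L₁ := by
  have hsub : L₁.Sublist (R :: (L₁ ++ L₂)) := (List.sublist_append_left L₁ L₂).cons R
  refine ⟨hab, fun x => ⟨?_, fun hx => ?_⟩, fun B hB => h.nonempty B (hsub.subset hB),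
    h.pairwise.sublist hsub⟩
  · rintro ⟨C, hC, hxC⟩
    have := (h.lt_of_mem_tail (List.mem_append_left L₂ hC) hxC).1
    have := hL₁ C hC x hxC
    omega
  · obtain ⟨D, hD, hxD⟩ := (h.exists_mem_iff x).2 (by omega)
    rcases List.mem_cons.1 hD with rfl | hD
    · have := hR x hxD; omega
    rcases List.mem_append.1 hD with hD | hD
    · exact ⟨D, hD, hxD⟩
    · have := hL₂ D hD x hxD; omega

theorem of_cons_append_right (h : IsNCBlocks a c (R :: (L₁ ++ L₂))) (hbR : b ∈ R)
    (hab : a < b) (hR : ∀ x ∈ R, x = a ∨ b ≤ x) (hL₁ : ∀ C ∈ L₁, ∀ x ∈ C, x < b)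
    (hL₂ : ∀ C ∈ L₂, ∀ x ∈ C, b < x) : IsNCBlocks b c (R.erase a :: L₂) := by
  have hbR' : b ∈ R.erase a := Finset.mem_erase.2 ⟨by omega, hbR⟩
  have hL₂sub : L₂.Sublist (L₁ ++ L₂) := List.sublist_append_right L₁ L₂
  refine ⟨(h.bounds List.mem_cons_self hbR).2.le, fun x => ⟨?_, fun hx => ?_⟩, ?_, ?_⟩
  · rintro ⟨C, hC, hxC⟩
    rcases List.mem_cons.1 hC with rfl | hC
    · have := (h.bounds List.mem_cons_self (Finset.mem_of_mem_erase hxC)).2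
      have := hR x (Finset.mem_of_mem_erase hxC)
      have := Finset.ne_of_mem_erase hxC
      omega
    · have := h.lt_of_mem_tail (hL₂sub.subset hC) hxC
      have := hL₂ C hC x hxC
      omega
  · obtain ⟨D, hD, hxD⟩ := (h.exists_mem_iff x).2 (by omega)
    rcases List.mem_cons.1 hD with rfl | hD
    · exact ⟨_, List.mem_cons_self, Finset.mem_erase.2 ⟨by omega, hxD⟩⟩
    rcases List.mem_append.1 hD with hD | hD
    · have := hL₁ D hD x hxD; omega
    · exact ⟨D, List.mem_cons_of_mem _ hD, hxD⟩
  · rintro C (_ | ⟨_, hC⟩)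
    · exact ⟨b, hbR'⟩
    · exact h.nonempty C (.tail _ (hL₂sub.subset hC))
  · refine List.Pairwise.cons (fun C hC => ?_) (h.pairwise.of_cons.sublist hL₂sub)
    exact (List.rel_of_pairwise_cons h.pairwise (hL₂sub.subset hC)).mono_left
      (Finset.erase_subset a R) (min_lt_min_of_forall_lt hbR'
        (h.nonempty C (.tail _ (hL₂sub.subset hC))) (hL₂ C hC))

theorem exists_graft_eq (h : IsNCBlocks a c (R :: L)) :
    ∃ b L₁ M, a < b ∧ IsNCBlocks (a + 1) b L₁ ∧ IsNCBlocks b c M ∧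
      graft a L₁ M = R :: L := by
  have haR := h.mem_head
  have hac : a < c := (h.bounds List.mem_cons_self haR).2
  rcases (R.erase a).eq_empty_or_nonempty with hR | hR
  · have hRa : R = {a} :=
      ((Finset.erase_eq_empty_iff R a).1 hR).resolve_left (Finset.ne_empty_of_mem haR)
    refine ⟨c, L, [], hac, ?_, nil c, by rw [graft, hRa]⟩
    rw [← List.append_nil L] at h
    exact h.of_cons_append_left hac le_rfl (by simp [hRa])
      (fun C hC x hx => (h.bounds (.tail _ (List.mem_append_left _ hC)) hx).2) (by simp)
  · set b := (R.erase a).min' hR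
    have hbR : b ∈ R.erase a := (R.erase a).min'_mem hR
    have hab : a < b := by
      have := (h.bounds List.mem_cons_self (Finset.mem_of_mem_erase hbR)).1
      have := Finset.ne_of_mem_erase hbR
      omega
    have hRb : ∀ x ∈ R, x = a ∨ b ≤ x := fun x hx =>
      or_iff_not_imp_left.2 fun hxa => (R.erase a).min'_le x (Finset.mem_erase.2 ⟨hxa, hx⟩)
    have hbc : b ≤ c := (h.bounds List.mem_cons_self (Finset.mem_of_mem_erase hbR)).2.le
    obtain ⟨L₁, L₂, rfl, hL₁, hL₂⟩ := List.exists_eq_append_of_pairwise h.pairwise.of_cons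
      (fun C hC => h.forall_lt_or_forall_gt (Finset.mem_of_mem_erase hbR) hC)
      fun B _ C hC hBb hCb hBC => by
        obtain ⟨y, hy⟩ := h.nonempty C (.tail _ hC)
        have hbB : (b : WithTop ℕ) ≤ B.min :=
          Finset.le_min fun x hx => WithTop.coe_le_coe.2 (hBb x hx).le
        have := hbB.trans_lt (hBC.min_lt_min.trans_le (Finset.min_le hy))
        exact absurd (hCb y hy) (not_lt.2 (WithTop.coe_lt_coe.1 this).le)
    refine ⟨b, L₁, R.erase a :: L₂, hab,
      h.of_cons_append_left hab hbc hRb hL₁ fun C hC x hx => (hL₂ C hC x hx).le,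
      h.of_cons_append_right (Finset.mem_of_mem_erase hbR) hab hRb hL₁ hL₂, ?_⟩
    rw [graft, Finset.insert_erase haR]

theorem graft_inj {b' c' : ℕ} {L L' M M' : List (Finset ℕ)} (hL : IsNCBlocks (a + 1) b L)
    (hM : IsNCBlocks b c M) (hL' : IsNCBlocks (a + 1) b' L') (hM' : IsNCBlocks b' c' M')
    (h : graft a L M = graft a L' M') : L = L' ∧ M = M' := by
  have not_singleton {b c : ℕ} {R : Finset ℕ} {F : List (Finset ℕ)} (hL : a + 1 ≤ b)
      (hM : IsNCBlocks b c (R :: F)) : insert a R ≠ {a} := fun e => by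
    have := Finset.mem_singleton.1 (e ▸ Finset.mem_insert_of_mem hM.mem_head)
    omega
  cases M with
  | nil =>
    cases M' with
    | nil => simpa [graft] using h
    | cons R' F' => exact absurd (List.cons.inj h).1.symm (not_singleton hL'.le hM')
  | cons R F =>
    cases M' with
    | nil => exact absurd (List.cons.inj h).1 (not_singleton hL.le hM)
    | cons R' F' =>
      obtain ⟨hRR, hLF⟩ := List.cons.inj h
      have haR : a ∉ R := fun ha => by
        have := (hM.bounds List.mem_cons_self ha).1; have := hL.le; omega
      have haR' : a ∉ R' := fun ha => by
        have := (hM'.bounds List.mem_cons_self ha).1; have := hL'.le; omega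
      obtain rfl : R = R' := by rw [← Finset.erase_insert haR, hRR, Finset.erase_insert haR']
      obtain rfl : b = b' := WithTop.coe_injective (hM.min_head.symm.trans hM'.min_head)
      have below {L : List (Finset ℕ)} (hL : IsNCBlocks (a + 1) b L) :
          ∀ C ∈ L, ∀ x ∈ C, x < b := fun C hC x hx => (hL.bounds hC hx).2
      have above {c F} (hM : IsNCBlocks b c (R :: F)) : ∀ C ∈ F, ¬∀ x ∈ C, x < b := by
        intro C hC hCb
        obtain ⟨y, hy⟩ := hM.nonempty C (.tail _ hC)
        exact absurd (hCb y hy) (not_lt.2 (hM.lt_of_mem_tail hC hy).1.le)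
      obtain ⟨rfl, rfl⟩ :=
        List.append_inj_of_forall hLF (below hL) (below hL') (above hM) (above hM')
      exact ⟨rfl, rfl⟩

end IsNCBlocks

namespace PTree

@[elab_as_elim, induction_eliminator]
theorem cons_induction {motive : PTree → Prop} (nil : motive (node []))
    (cons : ∀ t ts, motive t → motive (node ts) → motive (node (t :: ts))) : ∀ t, motive t
  | node [] => nil
  | node (t :: ts) => cons t ts (cons_induction nil cons t) (cons_induction nil cons (node ts))

/-- The number of nodes: every node but the root is a child of exactly one internal node. -/
def size (t : PTree) : ℕ := t.signature.sum + 1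

theorem signature_node_cons (t : PTree) (ts : List PTree) :
    (node (t :: ts)).signature =
      (ts.length + 1) :: (t.signature ++ (ts.map signature).flatten) := by
  rw [signature]
  simp

theorem size_node_cons (t : PTree) (ts : List PTree) :
    (node (t :: ts)).size = t.size + (node ts).size := by
  cases ts <;> simp [size, signature_node_cons, signature, List.sum_flatten] <;> omega

/-- With the nodes of a tree numbered `o, o + 1, …` in preorder, the sets of numbers of the
children of its internal nodes, in preorder of the parents. Splitting off the first subtree `t`
of `node (t :: ts)`, the nodes of `node ts` other than its root are renumbered by `t.size`, and
its root block gains the root `o + 1` of `t`. -/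
def blocks : PTree → ℕ → List (Finset ℕ)
  | node [], _ => []
  | node (t :: ts), o => graft (o + 1) (blocks t (o + 1)) (blocks (node ts) (o + t.size))

theorem isNCBlocks_blocks (t : PTree) (o : ℕ) :
    IsNCBlocks (o + 1) (o + t.size) (t.blocks o) := by
  induction t generalizing o with
  | nil => simpa [blocks, size, signature] using IsNCBlocks.nil (o + 1)
  | cons t ts iht ihts =>
    rw [blocks, size_node_cons, ← add_assoc]
    exact isNCBlocks_graft (add_right_comm o 1 t.size ▸ iht (o + 1)) (ihts (o + t.size))

theorem map_card_blocks (t : PTree) (o : ℕ) : (t.blocks o).map Finset.card = t.signature := by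
  induction t generalizing o with
  | nil => simp [blocks, signature]
  | cons t ts iht ihts =>
    rw [blocks, signature_node_cons]
    cases ts with
    | nil => simp [blocks, graft, iht]
    | cons u us =>
      have hM := isNCBlocks_blocks (node (u :: us)) (o + t.size)
      have hsig := ihts (o + t.size)
      obtain ⟨R, F, hRF⟩ : ∃ R F, (node (u :: us)).blocks (o + t.size) = R :: F :=
        List.exists_cons_of_ne_nil (by rw [blocks]; exact graft_ne_nil _ _ _)
      rw [hRF] at hM hsig ⊢
      have hoR : o + 1 ∉ R := fun h => by
        have := (hM.bounds List.mem_cons_self h).1; have : 0 < t.size := Nat.succ_pos _; omega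
      rw [signature_node_cons, List.map_cons, List.cons.injEq] at hsig
      simp [graft, Finset.card_insert_of_notMem hoR, hsig.1, hsig.2, iht]

theorem blocks_inj {t t' : PTree} {o : ℕ} (h : t.blocks o = t'.blocks o) : t = t' := by
  induction t generalizing t' o with
  | nil =>
    obtain ⟨_ | ⟨u, us⟩⟩ := t'
    · rfl
    · rw [blocks, blocks] at h
      exact absurd h.symm (graft_ne_nil _ _ _)
  | cons t ts iht ihts =>
    obtain ⟨_ | ⟨u, us⟩⟩ := t'
    all_goals rw [blocks, blocks] at h
    · exact absurd h (graft_ne_nil _ _ _)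
    obtain ⟨ht, hts⟩ := IsNCBlocks.graft_inj
      (add_right_comm o 1 t.size ▸ isNCBlocks_blocks t (o + 1))
      (isNCBlocks_blocks (node ts) (o + t.size))
      (add_right_comm o 1 u.size ▸ isNCBlocks_blocks u (o + 1))
      (isNCBlocks_blocks (node us) (o + u.size)) h
    obtain rfl := iht ht
    obtain ⟨⟩ := ihts hts
    rfl

theorem exists_blocks_eq {o c : ℕ} {L : List (Finset ℕ)} (h : IsNCBlocks (o + 1) c L) :
    ∃ t : PTree, o + t.size = c ∧ t.blocks o = L := by
  induction hn : c - o using Nat.strong_induction_on generalizing o c L with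
  | _ n ih =>
  cases L with
  | nil => exact ⟨node [], by simp [size, signature, h.eq_of_nil], by rw [blocks]⟩
  | cons R F =>
    obtain ⟨b, L₁, M, hab, hL₁, hM, hgraft⟩ := h.exists_graft_eq
    obtain ⟨t, ht, rfl⟩ := ih (b - (o + 1)) (by have := hM.le; omega) hL₁ rfl
    have hM' : IsNCBlocks (b - 1 + 1) c M := by rwa [Nat.sub_add_cancel (by omega)]
    obtain ⟨⟨ts⟩, hts, rfl⟩ := ih (c - (b - 1)) (by have := h.le; omega) hM' rfl
    refine ⟨node (t :: ts), by rw [size_node_cons]; omega, ?_⟩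
    rw [blocks, ← hgraft]
    congr 2
    omega

end PTree

namespace IsNCBlocks

variable {a b n : ℕ} {L : List (Finset ℕ)}

theorem ncBefore_or_ncBefore (h : IsNCBlocks a b L) {B C : Finset ℕ} (hB : B ∈ L) (hC : C ∈ L)
    (hBC : B ≠ C) : NCBefore B C ∨ NCBefore C B :=
  @List.Pairwise.forall _ (fun B C => NCBefore B C ∨ NCBefore C B) _ ⟨fun _ _ => Or.symm⟩
    (h.pairwise.imp Or.inl) _ hB _ hC hBC

theorem pairwise_min_lt_min (h : IsNCBlocks a b L) : L.Pairwise fun B C => B.min < C.min :=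
  h.pairwise.imp NCBefore.min_lt_min

theorem eq_of_toFinset_eq {a' b' : ℕ} {L' : List (Finset ℕ)} (h : IsNCBlocks a b L)
    (h' : IsNCBlocks a' b' L') (e : L.toFinset = L'.toFinset) : L = L' :=
  (List.perm_of_nodup_nodup_toFinset_eq h.pairwise_min_lt_min.nodup
    h'.pairwise_min_lt_min.nodup e).eq_of_pairwise
    (fun _ _ _ _ hBC hCB => absurd (hBC.min_lt_min.trans hCB.min_lt_min) (lt_irrefl _))
    h.pairwise h'.pairwise

def finpartition (h : IsNCBlocks 1 (n + 1) L) : Finpartition (Finset.Icc 1 n) where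
  parts := L.toFinset
  supIndep := Finset.supIndep_iff_pairwiseDisjoint.2 fun B hB C hC hBC => by
    simp only [Finset.mem_coe, List.mem_toFinset] at hB hC
    rcases h.ncBefore_or_ncBefore hB hC hBC with h' | h'
    exacts [h'.disjoint, h'.disjoint.symm]
  sup_parts := by
    ext x
    simp only [Finset.mem_sup, List.mem_toFinset, id, h.exists_mem_iff, Finset.mem_Icc]
    omega
  bot_notMem hB := by simpa using h.nonempty ⊥ (List.mem_toFinset.1 hB)

theorem noncrossing_finpartition (h : IsNCBlocks 1 (n + 1) L) : Noncrossing h.finpartition := by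
  rintro ⟨B, hB, C, hC, hBC, hcross⟩
  rcases h.ncBefore_or_ncBefore (List.mem_toFinset.1 hB) (List.mem_toFinset.1 hC) hBC with h' | h'
  exacts [h'.not_crosses hcross, h'.not_crosses' hcross]

theorem sortedBlocks_finpartition (h : IsNCBlocks 1 (n + 1) L) :
    SortedBlocks h.finpartition L :=
  ⟨h.pairwise_min_lt_min.nodup, rfl, h.pairwise_min_lt_min⟩

end IsNCBlocks

theorem isNCBlocks_of_sortedBlocks {n : ℕ} {π : Finpartition (Finset.Icc 1 n)}
    {L : List (Finset ℕ)} (hπ : Noncrossing π) (hL : SortedBlocks π L) :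
    IsNCBlocks 1 (n + 1) L := by
  have hmem : ∀ B, B ∈ L ↔ B ∈ π.parts := fun B => by rw [← hL.2.1, List.mem_toFinset]
  refine ⟨by omega, fun x => ⟨?_, fun hx => ?_⟩,
    fun B hB => π.nonempty_of_mem_parts ((hmem B).1 hB), ?_⟩
  · rintro ⟨B, hB, hx⟩
    have := Finset.mem_Icc.1 (π.le ((hmem B).1 hB) hx)
    omega
  · obtain ⟨B, hB, hxB⟩ := π.exists_mem (Finset.mem_Icc.2 ⟨hx.1, by omega⟩)
    exact ⟨B, (hmem B).2 hB, hxB⟩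
  · refine hL.2.2.imp_of_mem fun {B C} hB hC hlt => ?_
    have hBC : B ≠ C := fun e => lt_irrefl _ (e ▸ hlt)
    exact ⟨π.disjoint ((hmem B).1 hB) ((hmem C).1 hC) hBC, hlt,
      fun hcross => hπ ⟨B, (hmem B).1 hB, C, (hmem C).1 hC, hBC, hcross⟩,
      fun hcross => hπ ⟨C, (hmem C).1 hC, B, (hmem B).1 hB, hBC.symm, hcross⟩⟩

noncomputable def ncBlocksEquivMatchings (n : ℕ) (P : List (Finset ℕ) → Prop) :
    {L // IsNCBlocks 1 (n + 1) L ∧ P L} ≃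
      {π : Finpartition (Finset.Icc 1 n) // Noncrossing π ∧ ∃ L, SortedBlocks π L ∧ P L} :=
  Equiv.ofBijective
    (fun L => ⟨L.2.1.finpartition, L.2.1.noncrossing_finpartition, L.1,
      L.2.1.sortedBlocks_finpartition, L.2.2⟩)
    ⟨fun L L' e => Subtype.ext (L.2.1.eq_of_toFinset_eq L'.2.1 (congrArg (·.1.parts) e)),
      fun ⟨_, hπ, L, hL, hP⟩ =>
        ⟨⟨L, isNCBlocks_of_sortedBlocks hπ hL, hP⟩,
          Subtype.ext (Finpartition.ext hL.2.1)⟩⟩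

noncomputable def PTree.blocksEquiv (s : List ℕ) :
    {T : PTree // T.signature = s} ≃
      {L // IsNCBlocks 1 (s.sum + 1) L ∧ L.map Finset.card = s} :=
  Equiv.ofBijective
    (fun T => ⟨T.1.blocks 0, by simpa [PTree.size, T.2] using T.1.isNCBlocks_blocks 0,
      by rw [T.1.map_card_blocks, T.2]⟩)
    ⟨fun T T' e => Subtype.ext (PTree.blocks_inj (congrArg Subtype.val e)),
      fun ⟨L, hL, hs⟩ => by
        obtain ⟨t, -, rfl⟩ := PTree.exists_blocks_eq (o := 0) hL
        exact ⟨⟨t, t.map_card_blocks 0 ▸ hs⟩, rfl⟩⟩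

theorem sTrees_equiv_matchings_general (s : List ℕ) :
    Nonempty ({T : PTree // T.signature = s} ≃
      {π : Finpartition (Finset.Icc 1 s.sum) // Noncrossing π ∧
        ∃ L : List (Finset ℕ), SortedBlocks π L ∧ L.map Finset.card = s}) :=
  ⟨(PTree.blocksEquiv s).trans (ncBlocksEquivMatchings s.sum fun L => L.map Finset.card = s)⟩

/-- For every composition `s`, the set of `s`-trees is in bijection with the set of
complete noncrossing `s`-matchings: noncrossing partitions of `[|s|]` whose blocks,
ordered by increasing minima, have sizes `s(1), …, s(a)`. -/
theorem sTrees_equiv_matchings (s : List ℕ) (hs : ∀ x ∈ s, 0 < x) :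
    Nonempty ({T : PTree // T.signature = s} ≃
      {π : Finpartition (Finset.Icc 1 s.sum) // Noncrossing π ∧
        ∃ L : List (Finset ℕ), SortedBlocks π L ∧ L.map Finset.card = s}) :=
  sTrees_equiv_matchings_general s
end

section
/- For every composition s = (s(1),…,s(a)) with a ≥ 1, the number of s-Dyck paths equals the determinant of the (a−1)×(a−1) matrix whose (i,j) entry is the binomial coefficient C(λ_j + 1, j − i + 1), where λ_j = Σ_{i'=1}^{a−j}(s(i')−1) for j ∈ [a−1] (with the convention C(n,k) = 0 when k < 0, and the determinant of the empty matrix equal to 1). -/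
/-!
A Dyck path is determined by its heights `q₁ ≤ ⋯ ≤ q_{a-1}` after the first `a - 1` steps, which
are subject only to `qᵢ ≤ λ_{a-i}`; so we count weakly increasing sequences below a monotone
bound `b`. For bounds that never drop by more than one, the count and the determinant of the
lower Hessenberg matrix `(C(b j + 1, i + 1 - j))` obey the same two reductions: flattening a drop
`b j = b (j + 1) + 1` changes neither (for the matrix: column `j` minus column `j + 1`, by
Pascal's rule), and lowering the last bound `t + 1` of a monotone `b` to `t` loses exactly the
sequences ending in `t + 1`, which are counted by `b` without its last entry (for the matrix: the
last columns differ by a unit vector, whose minor is the matrix of `b` without its last entry).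
Induction on `n + ∑ b` reduces to `b = 0`, where both sides are `1`; reversing rows and columns
gives the matrix of the statement.
-/

/-- `μ` encodes an `s`-Dyck path: it has length `a = ℓ(s)`, sum `|s| - a`, and its
partial sums are bounded by those of `s - 𝟏`. -/
def IsDyck (s μ : List ℕ) : Prop :=
  μ.length = s.length ∧ μ.sum + s.length = s.sum ∧
    ∀ i ≤ s.length, (μ.take i).sum ≤ ((s.take i).map (fun x => x - 1)).sum

open Finset Matrix

lemma Matrix.det_updateCol_last_single {R : Type*} [CommRing R] {n : ℕ}
    (M : Matrix (Fin (n + 1)) (Fin (n + 1)) R) :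
    (M.updateCol (Fin.last n) (Pi.single (Fin.last n) 1)).det =
      (M.submatrix Fin.castSucc Fin.castSucc).det := by
  rw [det_succ_column _ (Fin.last n), Fintype.sum_eq_single (Fin.last n),
    submatrix_updateCol_succAbove]
  · simp
  · intro i hi
    simp [hi]

lemma Fin.snoc_le_snoc_iff {n : ℕ} {α : Type*} [Preorder α] {p q : Fin n → α} {x y : α} :
    (Fin.snoc p x : Fin (n + 1) → α) ≤ Fin.snoc q y ↔ p ≤ q ∧ x ≤ y := by
  simp [Pi.le_def, Fin.forall_fin_succ']

lemma Fin.monotone_snoc_iff {n : ℕ} {α : Type*} [Preorder α] {p : Fin n → α} {x : α} :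
    Monotone (Fin.snoc p x : Fin (n + 1) → α) ↔ Monotone p ∧ ∀ i, p i ≤ x := by
  refine ⟨fun h => ⟨fun i j hij => ?_, fun i => ?_⟩, fun ⟨hp, hx⟩ i j hij => ?_⟩
  · simpa using h (Fin.castSucc_le_castSucc_iff.mpr hij)
  · simpa using h (Fin.castSucc_lt_last i).le
  · induction j using Fin.lastCases with
    | last =>
      induction i using Fin.lastCases with
      | last => rfl
      | cast i => simpa using hx i
    | cast j =>
      induction i using Fin.lastCases with
      | last => exact absurd hij (Fin.castSucc_lt_last j).not_ge
      | cast i => simpa using hp (Fin.castSucc_le_castSucc_iff.mp hij)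

lemma List.sum_take_map_range_sub {Q : ℕ → ℕ} (hQ : Monotone Q) {n k : ℕ} (hk : k ≤ n) :
    (((List.range n).map fun i => Q (i + 1) - Q i).take k).sum = Q k - Q 0 := by
  rw [← List.map_take, List.take_range, min_eq_left hk]
  induction k with
  | zero => simp
  | succ k ih =>
    have h0 : Q 0 ≤ Q k := hQ (Nat.zero_le k)
    have h1 : Q k ≤ Q (k + 1) := hQ (Nat.le_succ k)
    rw [List.sum_range_succ, ih (by omega)]
    omega

lemma List.sum_map_sub_one_add_length {l : List ℕ} (hl : ∀ x ∈ l, 0 < x) :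
    (l.map fun x => x - 1).sum + l.length = l.sum := by
  induction l with
  | nil => rfl
  | cons x l ih =>
    simp only [List.map_cons, List.sum_cons, List.length_cons]
    have := hl x List.mem_cons_self
    have := ih fun y hy => hl y (List.mem_cons_of_mem x hy)
    omega

section BinomHessenberg

variable {n : ℕ}

def binomHessenberg (b : Fin n → ℕ) : Matrix (Fin n) (Fin n) ℤ :=
  Matrix.of fun i j => if (j : ℕ) ≤ i + 1 then ((b j + 1).choose (i + 1 - j) : ℤ) else 0

@[simp] lemma binomHessenberg_apply (b : Fin n → ℕ) (i j : Fin n) :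
    binomHessenberg b i j = if (j : ℕ) ≤ i + 1 then ((b j + 1).choose (i + 1 - j) : ℤ) else 0 :=
  rfl

lemma det_binomHessenberg_zero : (binomHessenberg (0 : Fin n → ℕ)).det = 1 := by
  rw [det_of_isUpperTriangular]
  · exact prod_eq_one fun i _ => by simp
  · intro i j hji
    have hlt : (j : ℕ) < i := hji
    simp [Nat.choose_eq_zero_of_lt (show 1 < (i : ℕ) + 1 - j by omega)]

/-- Pascal's rule for a column entry of `binomHessenberg`: raising the parameter of column `j`
by one adds the entry of column `j + 1`. -/
lemma choose_column_succ (c i j : ℕ) :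
    (if j ≤ i + 1 then ((c + 2).choose (i + 1 - j) : ℤ) else 0) =
      (if j ≤ i + 1 then ((c + 1).choose (i + 1 - j) : ℤ) else 0) +
        if j + 1 ≤ i + 1 then ((c + 1).choose (i + 1 - (j + 1)) : ℤ) else 0 := by
  rcases lt_trichotomy j (i + 1) with h | rfl | h
  · rw [if_pos h.le, if_pos h.le, if_pos (by omega), show i + 1 - j = i - j + 1 by omega,
      show i + 1 - (j + 1) = i - j by omega, Nat.choose_succ_succ', Nat.cast_add, add_comm]
  · simp
  · simp [show ¬ j ≤ i + 1 by omega, show ¬ j + 1 ≤ i + 1 by omega]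

lemma det_binomHessenberg_snoc_succ (b : Fin n → ℕ) (t : ℕ) :
    (binomHessenberg (Fin.snoc b (t + 1) : Fin (n + 1) → ℕ)).det =
      (binomHessenberg (Fin.snoc b t : Fin (n + 1) → ℕ)).det + (binomHessenberg b).det := by
  set M := binomHessenberg (Fin.snoc b t : Fin (n + 1) → ℕ)
  have hcol : binomHessenberg (Fin.snoc b (t + 1) : Fin (n + 1) → ℕ) =
      M.updateCol (Fin.last n) ((fun i => M i (Fin.last n)) + Pi.single (Fin.last n) 1) := by
    ext i j
    rcases Fin.eq_castSucc_or_eq_last j with ⟨j, rfl⟩ | rfl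
    · simp [M]
    · have hpascal := choose_column_succ t i n
      simp only [updateCol_self, binomHessenberg_apply, Fin.snoc_last, Fin.val_last, M]
        at hpascal ⊢
      rw [hpascal]
      rcases Fin.eq_castSucc_or_eq_last i with ⟨i, rfl⟩ | rfl
      · simp [Fin.castSucc_ne_last, show ¬ n ≤ (i : ℕ) by omega]
      · simp
  have hminor : M.submatrix Fin.castSucc Fin.castSucc = binomHessenberg b := by
    ext i j
    simp [M]
  rw [hcol, det_updateCol_add, updateCol_eq_self, det_updateCol_last_single, hminor]

lemma det_binomHessenberg_update (b : Fin (n + 1) → ℕ) (j : Fin n) (t : ℕ)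
    (hj : b j.castSucc = t + 1) (hj' : b j.succ = t) :
    (binomHessenberg b).det = (binomHessenberg (Function.update b j.castSucc t)).det := by
  set M := binomHessenberg (Function.update b j.castSucc t)
  have hcol : binomHessenberg b =
      M.updateCol j.castSucc fun i => M i j.castSucc + M i j.succ := by
    ext i k
    by_cases hk : k = j.castSucc
    · subst hk
      simpa only [updateCol_self, binomHessenberg_apply, M, Function.update_self,
        Function.update_of_ne (Fin.castSucc_lt_succ (i := j)).ne', hj, hj', Fin.val_castSucc,
        Fin.val_succ] using choose_column_succ t i j
    · simp [M, updateCol_ne hk, Function.update_of_ne hk]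
  rw [hcol, det_updateCol_add_self _ (Fin.castSucc_lt_succ (i := j)).ne]

lemma det_binomHessenberg_eq_det_rev (b : Fin n → ℕ) :
    (binomHessenberg b).det = (Matrix.of fun i j : Fin n =>
      if (i : ℕ) ≤ j + 1 then ((b j.rev + 1).choose (j + 1 - i) : ℤ) else 0).det := by
  rw [← det_submatrix_equiv_self Fin.revPerm]
  congr 1
  ext i j
  simp only [submatrix_apply, Fin.revPerm_apply, binomHessenberg_apply, Fin.val_rev, of_apply]
  have := i.isLt
  have := j.isLt
  simp only [show n - (j + 1) ≤ n - (i + 1) + 1 ↔ (i : ℕ) ≤ j + 1 by omega,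
    show n - (i + 1) + 1 - (n - (j + 1)) = j + 1 - i by omega]

end BinomHessenberg

section MonotoneBelow

variable {n : ℕ}

def monotoneBelow (b : Fin n → ℕ) : Finset (Fin n → ℕ) := {q ∈ Iic b | Monotone q}

lemma mem_monotoneBelow {b q : Fin n → ℕ} : q ∈ monotoneBelow b ↔ q ≤ b ∧ Monotone q := by
  simp [monotoneBelow]

lemma monotoneBelow_zero : monotoneBelow (0 : Fin n → ℕ) = {0} := by
  ext q
  simp only [mem_monotoneBelow, mem_singleton, nonpos_iff_eq_zero]
  exact ⟨And.left, fun h => ⟨h, h ▸ monotone_const⟩⟩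

lemma snoc_mem_monotoneBelow_snoc {b p : Fin n → ℕ} {c x : ℕ} :
    (Fin.snoc p x : Fin (n + 1) → ℕ) ∈ monotoneBelow (Fin.snoc b c) ↔
      p ∈ monotoneBelow b ∧ x ≤ c ∧ ∀ i, p i ≤ x := by
  simp only [mem_monotoneBelow, Fin.snoc_le_snoc_iff, Fin.monotone_snoc_iff]
  tauto

lemma card_monotoneBelow_snoc_succ (b : Fin n → ℕ) (t : ℕ) (hb : ∀ i, b i ≤ t + 1) :
    #(monotoneBelow (Fin.snoc b (t + 1) : Fin (n + 1) → ℕ)) =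
      #(monotoneBelow (Fin.snoc b t : Fin (n + 1) → ℕ)) + #(monotoneBelow b) := by
  have snoc_init (q : Fin (n + 1) → ℕ) : ∃ p x, q = Fin.snoc p x :=
    ⟨_, _, (Fin.snoc_init_self q).symm⟩
  rw [← card_filter_add_card_filter_not (fun q => q (Fin.last n) ≤ t)]
  congr 1
  · congr 1
    ext q
    obtain ⟨p, x, rfl⟩ := snoc_init q
    simp only [mem_filter, snoc_mem_monotoneBelow_snoc, Fin.snoc_last]
    grind
  · refine card_nbij' Fin.init (Fin.snoc · (t + 1)) ?_ ?_ ?_ ?_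
    · intro q hq
      obtain ⟨p, x, rfl⟩ := snoc_init q
      simp only [mem_coe, mem_filter, snoc_mem_monotoneBelow_snoc] at hq
      simpa using hq.1.1
    · intro p hp
      rw [mem_coe, mem_monotoneBelow] at hp
      simp only [mem_coe, mem_filter, snoc_mem_monotoneBelow_snoc, Fin.snoc_last]
      exact ⟨⟨mem_monotoneBelow.mpr hp, le_rfl, fun i => (hp.1 i).trans (hb i)⟩, by omega⟩
    · intro q hq
      obtain ⟨p, x, rfl⟩ := snoc_init q
      simp only [mem_coe, mem_filter, snoc_mem_monotoneBelow_snoc, Fin.snoc_last] at hq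
      simp [show x = t + 1 by omega]
    · intro p _
      simp

lemma monotoneBelow_update (b : Fin n → ℕ) {j k : Fin n} (hjk : j ≤ k) {c : ℕ}
    (hc : b k ≤ c) (hcj : c ≤ b j) :
    monotoneBelow (Function.update b j c) = monotoneBelow b := by
  ext q
  simp only [mem_monotoneBelow, and_congr_left_iff]
  intro hq
  refine ⟨fun h i => ?_, fun h i => ?_⟩
  · by_cases hi : i = j
    · subst hi
      simpa using (h i).trans_eq (Function.update_self i c b) |>.trans hcj
    · simpa [hi] using h i
  · by_cases hi : i = j
    · subst hi
      simpa using (hq hjk).trans ((h k).trans hc)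
    · simpa [hi] using h i

def NearlyMonotone (b : Fin n → ℕ) : Prop := ∀ i j, i ≤ j → b i ≤ b j + 1

lemma Monotone.nearlyMonotone {b : Fin n → ℕ} (hb : Monotone b) : NearlyMonotone b :=
  fun _ _ hij => (hb hij).trans (Nat.le_succ _)

lemma Monotone.nearlyMonotone_of_le_of_le_add_one {b b' : Fin n → ℕ} (hb : Monotone b)
    (h₁ : ∀ i, b' i ≤ b i) (h₂ : ∀ i, b i ≤ b' i + 1) : NearlyMonotone b' :=
  fun i j hij => (h₁ i).trans ((hb hij).trans (h₂ j))

lemma NearlyMonotone.update_castSucc {b : Fin (n + 1) → ℕ} (hb : NearlyMonotone b) (j : Fin n) :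
    NearlyMonotone (Function.update b j.castSucc (b j.succ)) := by
  intro i k hik
  by_cases hi : i = j.castSucc <;> by_cases hk : k = j.castSucc
  · simp [hi, hk]
  · subst hi
    have : j.succ ≤ k := Fin.castSucc_lt_iff_succ_le.mp (lt_of_le_of_ne hik (Ne.symm hk))
    simpa [hk] using hb _ _ this
  · subst hk
    simpa [hi] using hb _ _ (hik.trans (Fin.castSucc_le_succ j))
  · simpa [hi, hk] using hb _ _ hik

theorem card_monotoneBelow_eq_det_binomHessenberg (b : Fin n → ℕ) (hb : NearlyMonotone b) :
    (#(monotoneBelow b) : ℤ) = (binomHessenberg b).det := by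
  induction hN : n + ∑ i, b i using Nat.strong_induction_on generalizing n b with
  | _ N ih =>
  have ih' {k : ℕ} (b' : Fin k → ℕ) (hlt : k + ∑ i, b' i < N) (hb' : NearlyMonotone b') :
      (#(monotoneBelow b') : ℤ) = (binomHessenberg b').det :=
    ih _ hlt b' hb' rfl
  subst hN
  cases n with
  | zero => rw [Subsingleton.elim b 0, monotoneBelow_zero, det_binomHessenberg_zero]; rfl
  | succ m =>
    by_cases hmono : Monotone b
    · obtain ⟨p, x, rfl⟩ : ∃ p x, b = Fin.snoc p x := ⟨_, _, (Fin.snoc_init_self b).symm⟩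
      have hp := Fin.monotone_snoc_iff.mp hmono
      cases x with
      | zero =>
        have hzero : (Fin.snoc p 0 : Fin (m + 1) → ℕ) = 0 := by
          rw [← Fin.snoc_init_self 0, Fin.snoc_inj]
          exact ⟨funext fun i => Nat.le_zero.mp (hp.2 i), rfl⟩
        rw [hzero, monotoneBelow_zero, det_binomHessenberg_zero]
        rfl
      | succ t =>
        have hsnoc := hmono.nearlyMonotone_of_le_of_le_add_one
            (b' := (Fin.snoc p t : Fin (m + 1) → ℕ))
            (fun i => by induction i using Fin.lastCases <;> simp)
            (fun i => by induction i using Fin.lastCases <;> simp)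
        rw [card_monotoneBelow_snoc_succ p t hp.2, det_binomHessenberg_snoc_succ, Nat.cast_add,
          ih' _ (by simp [Fin.sum_univ_castSucc]) hsnoc,
          ih' p (by simp [Fin.sum_univ_castSucc]; omega) hp.1.nearlyMonotone]
    · obtain ⟨j, hj⟩ := not_forall.mp (mt Fin.monotone_iff_le_succ.mpr hmono)
      have hdrop : b j.castSucc = b j.succ + 1 := by
        have := hb _ _ (Fin.castSucc_le_succ j)
        omega
      have hsum : ∑ i, Function.update b j.castSucc (b j.succ) i < ∑ i, b i := by
        refine sum_lt_sum (fun i _ => ?_) ⟨j.castSucc, mem_univ _, by simp [hdrop]⟩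
        by_cases hi : i = j.castSucc <;> simp [hi, hdrop]
      rw [← monotoneBelow_update b (Fin.castSucc_le_succ j) le_rfl (by omega),
        det_binomHessenberg_update b j _ hdrop rfl]
      exact ih' _ (by omega) (hb.update_castSucc j)

end MonotoneBelow

section DyckPaths

variable (s : List ℕ)

def dyckBound (k : ℕ) : ℕ := ((s.take k).map fun x => x - 1).sum

lemma monotone_dyckBound : Monotone (dyckBound s) := by
  intro i j hij
  simpa only [dyckBound, List.map_take] using List.monotone_sum_take (s.map fun x => x - 1) hij

def heightsOfPath (μ : List ℕ) : Fin (s.length - 1) → ℕ := fun i => (μ.take (i + 1)).sum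

/-- The heights `q` padded with the height `0` before the first step and the final height after
the last one. -/
def extendHeights (q : Fin (s.length - 1) → ℕ) (k : ℕ) : ℕ :=
  if k = 0 then 0 else if h : k - 1 < s.length - 1 then q ⟨k - 1, h⟩ else dyckBound s s.length

def pathOfHeights (q : Fin (s.length - 1) → ℕ) : List ℕ :=
  (List.range s.length).map fun k => extendHeights s q (k + 1) - extendHeights s q k

variable {s}

lemma heightsOfPath_mem {μ : List ℕ} (hμ : IsDyck s μ) :
    heightsOfPath s μ ∈ monotoneBelow fun i => dyckBound s (i + 1) :=
  mem_monotoneBelow.mpr ⟨fun i => hμ.2.2 _ (by omega),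
    fun i j hij => List.monotone_sum_take μ (Nat.succ_le_succ hij)⟩

lemma extendHeights_length (q : Fin (s.length - 1) → ℕ) :
    extendHeights s q s.length = dyckBound s s.length := by
  unfold extendHeights
  split_ifs with h0 h <;> first | omega | simp [h0, dyckBound]

lemma monotone_extendHeights {q : Fin (s.length - 1) → ℕ}
    (hq : q ∈ monotoneBelow fun i => dyckBound s (i + 1)) : Monotone (extendHeights s q) := by
  rw [mem_monotoneBelow] at hq
  refine monotone_nat_of_le_succ fun k => ?_
  unfold extendHeights
  split_ifs <;> first
    | omega
    | contradiction
    | exact Nat.zero_le _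
    | exact hq.2 (Fin.mk_le_mk.mpr (by omega))
    | exact (hq.1 _).trans (monotone_dyckBound s (show k - 1 + 1 ≤ s.length by omega))

lemma extendHeights_le_dyckBound {q : Fin (s.length - 1) → ℕ}
    (hq : q ∈ monotoneBelow fun i => dyckBound s (i + 1)) {k : ℕ} (hk : k ≤ s.length) :
    extendHeights s q k ≤ dyckBound s k := by
  rw [mem_monotoneBelow] at hq
  unfold extendHeights
  split_ifs with h0 h1
  · exact Nat.zero_le _
  · simpa [Nat.sub_add_cancel (Nat.one_le_iff_ne_zero.mpr h0)] using hq.1 ⟨k - 1, h1⟩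
  · rw [show k = s.length by omega]

lemma sum_take_pathOfHeights {q : Fin (s.length - 1) → ℕ}
    (hq : q ∈ monotoneBelow fun i => dyckBound s (i + 1)) {k : ℕ} (hk : k ≤ s.length) :
    ((pathOfHeights s q).take k).sum = extendHeights s q k := by
  rw [pathOfHeights, List.sum_take_map_range_sub (monotone_extendHeights hq) hk]
  simp [extendHeights]

lemma isDyck_pathOfHeights (hs : ∀ x ∈ s, 0 < x) {q : Fin (s.length - 1) → ℕ}
    (hq : q ∈ monotoneBelow fun i => dyckBound s (i + 1)) : IsDyck s (pathOfHeights s q) := by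
  have hlen : (pathOfHeights s q).length = s.length := by simp [pathOfHeights]
  refine ⟨hlen, ?_, fun k hk => ?_⟩
  · rw [← List.take_length (l := pathOfHeights s q), hlen, sum_take_pathOfHeights hq le_rfl,
      extendHeights_length, ← List.sum_map_sub_one_add_length hs, dyckBound, List.take_length]
  · exact (sum_take_pathOfHeights hq hk).trans_le (extendHeights_le_dyckBound hq hk)

lemma extendHeights_heightsOfPath (hs : ∀ x ∈ s, 0 < x) {μ : List ℕ} (hμ : IsDyck s μ)
    {k : ℕ} (hk : k ≤ s.length) : extendHeights s (heightsOfPath s μ) k = (μ.take k).sum := by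
  unfold extendHeights heightsOfPath
  split_ifs with h0 h1
  · simp [h0]
  · simp [Nat.sub_add_cancel (Nat.one_le_iff_ne_zero.mpr h0)]
  · have hks : k = s.length := by omega
    have := List.sum_map_sub_one_add_length hs
    rw [hks, List.take_of_length_le hμ.1.le, dyckBound, List.take_length]
    have := hμ.2.1
    omega

lemma card_isDyck (hs : ∀ x ∈ s, 0 < x) :
    Nat.card {μ // IsDyck s μ} =
      #(monotoneBelow fun i : Fin (s.length - 1) => dyckBound s (i + 1)) := by
  rw [← Nat.card_eq_finsetCard]
  refine Nat.card_congr
    { toFun μ := ⟨heightsOfPath s μ, heightsOfPath_mem μ.2⟩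
      invFun q := ⟨pathOfHeights s q, isDyck_pathOfHeights hs q.2⟩
      left_inv μ := Subtype.ext (List.eq_of_sum_take_eq ?_ fun k hk => ?_)
      right_inv q := Subtype.ext (funext fun i => ?_) }
  · simp [pathOfHeights, μ.2.1]
  · rw [sum_take_pathOfHeights (heightsOfPath_mem μ.2) (hk.trans_eq (by simp [pathOfHeights])),
      extendHeights_heightsOfPath hs μ.2 (hk.trans_eq (by simp [pathOfHeights]))]
  · simp only [heightsOfPath]
    rw [sum_take_pathOfHeights q.2 (by omega)]
    simp [extendHeights]

end DyckPaths

theorem sCatalan_det_general (s : List ℕ) (hs : ∀ x ∈ s, 0 < x) :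
    (Nat.card {μ : List ℕ // IsDyck s μ} : ℤ) =
      Matrix.det (fun i j : Fin (s.length - 1) =>
        if (i : ℕ) ≤ (j : ℕ) + 1 then
          (Nat.choose (((s.take (s.length - ((j : ℕ) + 1))).map (fun x => x - 1)).sum + 1)
            ((j : ℕ) + 1 - (i : ℕ)) : ℤ)
        else 0) := by
  set b : Fin (s.length - 1) → ℕ := fun i => dyckBound s (i + 1)
  have hb : Monotone b := fun i j hij => monotone_dyckBound s (Nat.succ_le_succ hij)
  rw [card_isDyck hs, card_monotoneBelow_eq_det_binomHessenberg b hb.nearlyMonotone,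
    det_binomHessenberg_eq_det_rev]
  congr 1
  ext i j
  have hj : s.length - 1 - (j + 1) + 1 = s.length - (j + 1) := by omega
  simp [b, dyckBound, hj]

/-- The number of `s`-Dyck paths equals the determinant of the `(a-1) × (a-1)` matrix
with entries `C(λ_j + 1, j - i + 1)` where `λ_j = Σ_{i'=1}^{a-j} (s(i') - 1)`
(entries with `j - i + 1 < 0` are zero; the empty determinant is `1`). -/
theorem sCatalan_det (s : List ℕ) (hs : ∀ x ∈ s, 0 < x) (ha : 1 ≤ s.length) :
    (Nat.card {μ : List ℕ // IsDyck s μ} : ℤ) =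
      Matrix.det (fun i j : Fin (s.length - 1) =>
        if (i : ℕ) ≤ (j : ℕ) + 1 then
          (Nat.choose (((s.take (s.length - ((j : ℕ) + 1))).map (fun x => x - 1)).sum + 1)
            ((j : ℕ) + 1 - (i : ℕ)) : ℤ)
        else 0) :=
  sCatalan_det_general s hs
end

section
/- For every partition λ = (λ_1 ≥ λ_2 ≥ ⋯ ≥ λ_ℓ) of nonnegative integers, the number of sequences λ' = (λ'_1 ≥ λ'_2 ≥ ⋯ ≥ λ'_ℓ) of nonnegative integers with λ'_i ≤ λ_i for all i ∈ [ℓ] equals the determinant of the ℓ×ℓ matrix whose (i,j) entry is the binomial coefficient C(λ_j + 1, j − i + 1) (with the convention C(n,k) = 0 when k < 0). -/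
/-! Both sides satisfy the same recursion in `λ`.
If `λ_ℓ = 0`, every fitting `λ'` has `λ'_ℓ = 0` and the last column of the matrix is the unit
vector `e_ℓ`, so both sides equal their values at `(λ_1, …, λ_{ℓ-1})`.
If `λ_ℓ > 0`, write `λ = μ + 1`. The `λ'` fitting `λ` with `λ'_ℓ > 0` are the `μ' + 1` with `μ'`
fitting `μ`, and those with `λ'_ℓ = 0` are the `λ'` fitting `(λ_1, …, λ_{ℓ-1})`, padded by `0`.
On the matrix side Pascal's rule gives `M(μ + 1) = (1 + N) M(μ) + E_{ℓℓ}`, with `N` the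
nilpotent shift, and since `det (1 + N) = 1` the determinant splits the same way. -/

open Matrix

theorem Fin.antitone_snoc {α : Type*} [Preorder α] {n : ℕ} {g : Fin n → α} {a : α}
    (hg : Antitone g) (ha : ∀ i, a ≤ g i) : Antitone (Fin.snoc g a : Fin (n + 1) → α) := by
  intro i j hij
  induction j using Fin.lastCases with
  | last =>
    induction i using Fin.lastCases with
    | last => exact le_rfl
    | cast i => simpa using ha i
  | cast j =>
    induction i using Fin.lastCases with
    | last => exact absurd hij (Fin.castSucc_lt_last j).not_ge
    | cast i => simpa using hg (Fin.castSucc_le_castSucc_iff.mp hij)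

namespace Matrix

theorem det_updateCol_last_single_s7 {R : Type*} [CommRing R] {n : ℕ}
    (A : Matrix (Fin (n + 1)) (Fin (n + 1)) R) :
    (A.updateCol (Fin.last n) (Pi.single (Fin.last n) 1)).det =
      (A.submatrix Fin.castSucc Fin.castSucc).det := by
  rw [det_succ_column _ (Fin.last n), Fintype.sum_eq_single (Fin.last n)]
  · have hminor : (A.updateCol (Fin.last n) (Pi.single (Fin.last n) 1)).submatrix
        (Fin.last n).succAbove (Fin.last n).succAbove = A.submatrix Fin.castSucc Fin.castSucc := by
      ext i j
      simp
    rw [hminor, updateCol_self, Pi.single_eq_same, ← two_mul, pow_mul]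
    simp
  · intro i hi
    simp [updateCol_self, Pi.single_eq_of_ne hi]

theorem det_add_single_last {R : Type*} [CommRing R] {n : ℕ}
    (B : Matrix (Fin (n + 1)) (Fin (n + 1)) R) :
    (B + single (Fin.last n) (Fin.last n) 1).det =
      B.det + (B.submatrix Fin.castSucc Fin.castSucc).det := by
  have hcol : B + single (Fin.last n) (Fin.last n) 1 =
      B.updateCol (Fin.last n) ((fun i => B i (Fin.last n)) + Pi.single (Fin.last n) 1) := by
    ext i j
    rcases eq_or_ne j (Fin.last n) with rfl | hj
    · simp [Pi.single_apply, single_apply, eq_comm]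
    · simp [hj, Ne.symm hj]
  rw [hcol, det_updateCol_add, updateCol_eq_self, det_updateCol_last_single_s7]

def shiftMatrix (R : Type*) [Zero R] [One R] (n : ℕ) : Matrix (Fin n) (Fin n) R :=
  of fun i k => if (k : ℕ) = i + 1 then 1 else 0

theorem shiftMatrix_mul_apply {R : Type*} [Semiring R] {n : ℕ} (B : Matrix (Fin n) (Fin n) R)
    (i j : Fin n) :
    (shiftMatrix R n * B) i j = if h : (i : ℕ) + 1 < n then B ⟨i + 1, h⟩ j else 0 := by
  rw [mul_apply]
  split_ifs with h
  · rw [Fintype.sum_eq_single ⟨i + 1, h⟩]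
    · simp [shiftMatrix]
    · intro k hk
      simp [shiftMatrix, Fin.ext_iff.not.mp hk]
  · refine Fintype.sum_eq_zero _ fun k => ?_
    have : (k : ℕ) ≠ i + 1 := by omega
    simp [shiftMatrix, this]

theorem det_one_add_shiftMatrix (R : Type*) [CommRing R] (n : ℕ) :
    (1 + shiftMatrix R n).det = 1 := by
  rw [det_of_isUpperTriangular]
  · simp [shiftMatrix]
  · intro i j hji
    have hji : (j : ℕ) < i := hji
    simp [shiftMatrix, Fin.ext_iff, hji.ne', show (j : ℕ) ≠ i + 1 by omega]

end Matrix

def partitionsFitting {ℓ : ℕ} (lam : Fin ℓ → ℕ) : Set (Fin ℓ → ℕ) :=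
  {f | Antitone f ∧ ∀ i, f i ≤ lam i}

theorem finite_partitionsFitting {ℓ : ℕ} (lam : Fin ℓ → ℕ) : (partitionsFitting lam).Finite :=
  (Set.Finite.pi fun i => Set.finite_Iic (lam i)).subset fun _ hf i _ => hf.2 i

def krewerasEntry (m j i : ℕ) : ℤ :=
  if i ≤ j + 1 then ((m + 1).choose (j + 1 - i) : ℤ) else 0

def krewerasMatrix {ℓ : ℕ} (lam : Fin ℓ → ℕ) : Matrix (Fin ℓ) (Fin ℓ) ℤ :=
  of fun i j => krewerasEntry (lam j) j i

theorem krewerasEntry_add_one (m j i : ℕ) :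
    krewerasEntry (m + 1) j i = krewerasEntry m j i + krewerasEntry m j (i + 1) := by
  unfold krewerasEntry
  by_cases hij : i ≤ j
  · obtain ⟨k, rfl⟩ := Nat.exists_eq_add_of_le hij
    rw [if_pos (by omega), if_pos (by omega), if_pos (by omega),
      show i + k + 1 - i = k + 1 by omega, show i + k + 1 - (i + 1) = k by omega,
      Nat.choose_succ_succ]
    push_cast
    ring
  · rw [if_neg (by omega : ¬ i + 1 ≤ j + 1)]
    split_ifs <;> simp [show j + 1 - i = 0 by omega]

theorem krewerasEntry_zero_of_le {j i : ℕ} (h : i ≤ j) :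
    krewerasEntry 0 j i = if i = j then 1 else 0 := by
  obtain ⟨k, rfl⟩ := Nat.exists_eq_add_of_le h
  rw [krewerasEntry, if_pos (by omega), show i + k + 1 - i = k + 1 by omega]
  rcases k with _ | k
  · simp
  · simp [Nat.choose_eq_zero_of_lt]

theorem krewerasEntry_row_add_one_of_le (m : ℕ) {j i : ℕ} (h : j ≤ i) :
    krewerasEntry m j (i + 1) = if j = i then 1 else 0 := by
  unfold krewerasEntry
  split_ifs with h₁ h₂ h₂ <;> first | omega | simp [show j + 1 - (i + 1) = 0 by omega]

section Recursion

variable {n : ℕ}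

theorem partitionsFitting_inter_last_eq_zero (lam : Fin (n + 1) → ℕ) :
    partitionsFitting lam ∩ {f | f (Fin.last n) = 0} =
      (Fin.snoc · 0) '' partitionsFitting (Fin.init lam) := by
  ext f
  constructor
  · rintro ⟨⟨hf, hfl⟩, hlast : f (Fin.last n) = 0⟩
    refine ⟨Fin.init f, ⟨hf.comp_monotone Fin.strictMono_castSucc.monotone, fun i => hfl _⟩, ?_⟩
    change Fin.snoc (Fin.init f) 0 = f
    rw [← hlast, Fin.snoc_init_self]
  · rintro ⟨g, ⟨hg, hgl⟩, rfl⟩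
    refine ⟨⟨Fin.antitone_snoc hg fun _ => Nat.zero_le _, fun i => ?_⟩, Fin.snoc_last _ _⟩
    induction i using Fin.lastCases with
    | last => simp
    | cast i => simp only [Fin.snoc_castSucc]; exact hgl i

theorem partitionsFitting_add_one_diff_last_eq_zero (μ : Fin (n + 1) → ℕ) :
    partitionsFitting (μ + 1) \ {f | f (Fin.last n) = 0} = (· + 1) '' partitionsFitting μ := by
  ext f
  constructor
  · rintro ⟨⟨hf, hfl⟩, hlast : f (Fin.last n) ≠ 0⟩
    have hpos : ∀ i, 1 ≤ f i :=
      fun i => (Nat.one_le_iff_ne_zero.mpr hlast).trans (hf (Fin.le_last i))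
    refine ⟨f - 1, ⟨fun i j hij => Nat.sub_le_sub_right (hf hij) 1, fun i => ?_⟩, ?_⟩
    · simpa using Nat.sub_le_sub_right (hfl i) 1
    · funext i
      simpa using Nat.sub_add_cancel (hpos i)
  · rintro ⟨g, ⟨hg, hgl⟩, rfl⟩
    exact ⟨⟨fun i j hij => Nat.add_le_add_right (hg hij) 1,
      fun i => Nat.add_le_add_right (hgl i) 1⟩, Nat.succ_ne_zero _⟩

theorem ncard_partitionsFitting_of_last_eq_zero {lam : Fin (n + 1) → ℕ}
    (h : lam (Fin.last n) = 0) :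
    (partitionsFitting lam).ncard = (partitionsFitting (Fin.init lam)).ncard := by
  have hlast : partitionsFitting lam ∩ {f | f (Fin.last n) = 0} = partitionsFitting lam :=
    Set.inter_eq_left.mpr fun f hf => Nat.le_zero.mp (h ▸ hf.2 (Fin.last n))
  rw [← hlast, partitionsFitting_inter_last_eq_zero,
    Set.ncard_image_of_injective _ (Fin.snoc_left_injective (α := fun _ => ℕ) 0)]

theorem ncard_partitionsFitting_add_one (μ : Fin (n + 1) → ℕ) :
    (partitionsFitting (μ + 1)).ncard =
      (partitionsFitting μ).ncard + (partitionsFitting (Fin.init (μ + 1))).ncard := by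
  rw [← Set.ncard_inter_add_ncard_sdiff_eq_ncard _ {f | f (Fin.last n) = 0}
      (finite_partitionsFitting _), partitionsFitting_inter_last_eq_zero,
    partitionsFitting_add_one_diff_last_eq_zero, add_comm,
    Set.ncard_image_of_injective _ (add_left_injective 1),
    Set.ncard_image_of_injective _ (Fin.snoc_left_injective (α := fun _ => ℕ) 0)]

theorem det_krewerasMatrix_of_last_eq_zero {lam : Fin (n + 1) → ℕ} (h : lam (Fin.last n) = 0) :
    (krewerasMatrix lam).det = (krewerasMatrix (Fin.init lam)).det := by
  have hcol : krewerasMatrix lam =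
      (krewerasMatrix lam).updateCol (Fin.last n) (Pi.single (Fin.last n) 1) := by
    ext i j
    rcases eq_or_ne j (Fin.last n) with rfl | hj
    · simp [krewerasMatrix, h, krewerasEntry_zero_of_le (Fin.is_le i), Pi.single_apply,
        Fin.ext_iff]
    · simp [hj]
  rw [hcol, det_updateCol_last_single_s7]
  rfl

theorem krewerasMatrix_add_one (μ : Fin (n + 1) → ℕ) :
    krewerasMatrix (μ + 1) =
      (1 + shiftMatrix ℤ (n + 1)) * krewerasMatrix μ + single (Fin.last n) (Fin.last n) 1 := by
  ext i j
  rw [add_mul, one_mul, Matrix.add_apply, Matrix.add_apply, shiftMatrix_mul_apply, single_apply]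
  simp only [krewerasMatrix, of_apply, Pi.add_apply, Pi.one_apply, krewerasEntry_add_one]
  by_cases hi : (i : ℕ) + 1 < n + 1
  · have hi' : Fin.last n ≠ i := fun h => by rw [← h, Fin.val_last] at hi; omega
    simp [hi, hi']
  · -- Pascal's rule reaches the row below the matrix, which is the unit vector `e_ℓ`.
    obtain rfl : i = Fin.last n := Fin.ext (by rw [Fin.val_last]; omega)
    rw [Fin.val_last, krewerasEntry_row_add_one_of_le _ (Fin.is_le j)]
    simp [Fin.ext_iff, eq_comm]

theorem det_krewerasMatrix_add_one (μ : Fin (n + 1) → ℕ) :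
    (krewerasMatrix (μ + 1)).det =
      (krewerasMatrix μ).det + (krewerasMatrix (Fin.init (μ + 1))).det := by
  have hinit : krewerasMatrix (Fin.init (μ + 1)) =
      ((1 + shiftMatrix ℤ (n + 1)) * krewerasMatrix μ).submatrix Fin.castSucc Fin.castSucc := by
    ext i j
    change krewerasMatrix (μ + 1) i.castSucc j.castSucc = _
    rw [krewerasMatrix_add_one, Matrix.add_apply, single_apply,
      if_neg fun h => (Fin.castSucc_lt_last i).ne' h.1, add_zero, submatrix_apply]
  rw [krewerasMatrix_add_one, det_add_single_last, det_mul, det_one_add_shiftMatrix, one_mul,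
    hinit]

end Recursion

theorem ncard_partitionsFitting_eq_det {ℓ : ℕ} (lam : Fin ℓ → ℕ) (hlam : Antitone lam) :
    ((partitionsFitting lam).ncard : ℤ) = (krewerasMatrix lam).det := by
  induction ℓ with
  | zero =>
    have huniv : partitionsFitting lam = Set.univ :=
      Set.eq_univ_of_forall fun _ => ⟨fun i => i.elim0, fun i => i.elim0⟩
    simp [huniv]
  | succ n ih =>
    have hinit : ∀ {lam : Fin (n + 1) → ℕ}, Antitone lam → Antitone (Fin.init lam) :=
      fun h => h.comp_monotone Fin.strictMono_castSucc.monotone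
    obtain ⟨k, hk⟩ : ∃ k, lam (Fin.last n) = k := ⟨_, rfl⟩
    induction k generalizing lam with
    | zero =>
      rw [ncard_partitionsFitting_of_last_eq_zero hk, det_krewerasMatrix_of_last_eq_zero hk]
      exact ih _ (hinit hlam)
    | succ k ihk =>
      obtain ⟨μ, rfl⟩ : ∃ μ, lam = μ + 1 :=
        ⟨lam - 1, funext fun i => (Nat.sub_add_cancel
          ((Nat.succ_pos k).trans_eq hk.symm |>.trans_le (hlam (Fin.le_last i)))).symm⟩
      have hμ : Antitone μ := fun i j hij => by simpa using hlam hij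
      rw [ncard_partitionsFitting_add_one, det_krewerasMatrix_add_one, Nat.cast_add,
        ihk μ hμ (by simpa using hk), ih _ (hinit hlam)]

/-- Kreweras' determinant formula: for every partition `λ = (λ_1 ≥ ⋯ ≥ λ_ℓ)`, the
number of weakly decreasing sequences `λ'` of nonnegative integers with `λ'_i ≤ λ_i`
for all `i` equals the determinant of the `ℓ × ℓ` matrix with entries
`C(λ_j + 1, j - i + 1)` (entries with `j - i + 1 < 0` are zero). -/
theorem kreweras_det (ℓ : ℕ) (lam : Fin ℓ → ℕ) (hlam : Antitone lam) :
    (Nat.card {f : Fin ℓ → ℕ // Antitone f ∧ ∀ i, f i ≤ lam i} : ℤ) =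
      Matrix.det (fun i j : Fin ℓ =>
        if (i : ℕ) ≤ (j : ℕ) + 1 then
          (Nat.choose (lam j + 1) ((j : ℕ) + 1 - (i : ℕ)) : ℤ)
        else 0) := by
  have h := ncard_partitionsFitting_eq_det lam hlam
  rw [← Nat.card_coe_set_eq] at h
  exact h
end

section
/- For every composition s = (s(1),…,s(a)), the number of Stirling s-permutations equals the product ∏_{k=1}^{a} (s(1)+s(2)+⋯+s(k−1)+1), where the factor for k = 1 is the empty sum plus one, i.e., 1. -/
/-- `w` is an `s`-permutation: a word on the alphabet `{1,…,ℓ(s)}` with exactly `s(i)`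
occurrences of each letter `i`. -/
def IsSPerm (s w : List ℕ) : Prop :=
  (∀ x ∈ w, 1 ≤ x ∧ x ≤ s.length) ∧
    ∀ i : Fin s.length, w.count ((i : ℕ) + 1) = s.get i

/-- `w` avoids the pattern 212: there are no positions `p < q < r` with
`w_p = w_r` and `w_q < w_p`. -/
def Avoids212 (w : List ℕ) : Prop :=
  ¬ ∃ p q r : Fin w.length, p < q ∧ q < r ∧ w.get p = w.get r ∧ w.get q < w.get p

/-!
Induct on `s` from the right. In a Stirling `(t ++ [m])`-permutation the largest letter
`ℓ(t) + 1` cannot enclose a smaller letter, so its `m` copies form one contiguous block.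
Deleting that block gives a Stirling `t`-permutation, of length `t.sum`; conversely, inserting
a block of `m` copies of the new largest letter into any of the `t.sum + 1` gaps of a Stirling
`t`-permutation creates no 212. As `m > 0`, the gap is recovered from the result, so the
count gets multiplied by `t.sum + 1`.
-/

namespace List

variable {α : Type*}

theorem Sublist.of_cons_sublist_append_of_not_mem {x : α} {l u v : List α}
    (h : x :: l <+ u ++ v) (hx : x ∉ u) : x :: l <+ v := by
  obtain ⟨_ | ⟨y, l₁⟩, l₂, hl, h₁, h₂⟩ := sublist_append_iff.1 h
  · simpa [hl] using h₂
  · obtain ⟨rfl, -⟩ := cons_eq_cons.1 hl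
    exact absurd (h₁.subset mem_cons_self) hx

theorem Sublist.of_concat_sublist_append_of_not_mem {x : α} {l u v : List α}
    (h : l ++ [x] <+ u ++ v) (hx : x ∉ v) : l ++ [x] <+ u := by
  rw [← reverse_sublist] at h ⊢
  simp only [reverse_append, reverse_singleton, singleton_append] at h ⊢
  exact h.of_cons_sublist_append_of_not_mem (by simpa using hx)

theorem eq_of_sublist_append_replicate_append {x y : α} {u₁ u₂ : List α} {m : ℕ}
    (hu₁ : x ∉ u₁) (hu₂ : x ∉ u₂) (h : [x, y, x] <+ u₁ ++ replicate m x ++ u₂) :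
    y = x := by
  rw [append_assoc] at h
  have h' : [x, y] ++ [x] <+ replicate m x ++ u₂ := h.of_cons_sublist_append_of_not_mem hu₁
  have hy : y ∈ replicate m x := (h'.of_concat_sublist_append_of_not_mem hu₂).subset (by simp)
  exact eq_of_mem_replicate hy

variable [DecidableEq α]

theorem exists_eq_replicate_append {x : α} :
    ∀ {w : List α}, (∀ y, [y, x] <+ w → y = x) →
      ∃ v, w = replicate (w.count x) x ++ v ∧ x ∉ v
  | [], _ => ⟨[], by simp, by simp⟩
  | z :: w, h => by
    by_cases hz : z = x
    · subst hz
      obtain ⟨v, hw, hv⟩ := exists_eq_replicate_append fun y hy => h y (hy.cons z)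
      exact ⟨v, by rw [count_cons_self, replicate_succ, cons_append, ← hw], hv⟩
    · have hx : x ∉ w := fun hx => hz (h z ((singleton_sublist.2 hx).cons_cons z))
      refine ⟨z :: w, ?_, by simp [hx, Ne.symm hz]⟩
      simp [count_cons_of_ne hz, count_eq_zero_of_not_mem hx]

theorem exists_eq_append_replicate_append {x : α} :
    ∀ {w : List α}, (∀ y, [x, y, x] <+ w → y = x) →
      ∃ u₁ u₂, w = u₁ ++ replicate (w.count x) x ++ u₂ ∧ x ∉ u₁ ∧ x ∉ u₂
  | [], _ => ⟨[], [], by simp, by simp, by simp⟩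
  | z :: w, h => by
    by_cases hz : z = x
    · subst hz
      obtain ⟨v, hw, hv⟩ := exists_eq_replicate_append fun y hy => h y (hy.cons_cons z)
      exact ⟨[], v, by rw [count_cons_self, replicate_succ, nil_append, cons_append, ← hw],
        not_mem_nil, hv⟩
    · obtain ⟨u₁, u₂, hw, hu₁, hu₂⟩ :=
        exists_eq_append_replicate_append fun y hy => h y (hy.cons z)
      exact ⟨z :: u₁, u₂, by rw [count_cons_of_ne hz, cons_append, cons_append, ← hw],
        by simp [hu₁, Ne.symm hz], hu₂⟩

end List

open List

section InsertBlock

variable {α : Type*}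

def insertBlock (u : List α) (j m : ℕ) (x : α) : List α :=
  u.take j ++ replicate m x ++ u.drop j

theorem insertBlock_append_length (u₁ u₂ : List α) (m : ℕ) (x : α) :
    insertBlock (u₁ ++ u₂) u₁.length m x = u₁ ++ replicate m x ++ u₂ := by
  rw [insertBlock, take_left, drop_left]

variable [DecidableEq α] {u : List α} {j m : ℕ} {x : α}

theorem filter_insertBlock (hx : x ∉ u) : (insertBlock u j m x).filter (· ≠ x) = u := by
  have hu : u.filter (· ≠ x) = u := filter_eq_self.2 fun y hy => by
    simp only [ne_eq, decide_eq_true_eq]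
    rintro rfl
    exact hx hy
  rw [insertBlock, filter_append, filter_append, filter_replicate, if_neg (by simp), append_nil,
    ← filter_append, take_append_drop, hu]

theorem count_insertBlock_self (hx : x ∉ u) : (insertBlock u j m x).count x = m := by
  simp [insertBlock, count_eq_zero_of_not_mem (fun h => hx (mem_of_mem_take h)),
    count_eq_zero_of_not_mem (fun h => hx (mem_of_mem_drop h))]

theorem takeWhile_insertBlock (hx : x ∉ u) (hm : 0 < m) :
    (insertBlock u j m x).takeWhile (· ≠ x) = u.take j := by
  obtain ⟨m, rfl⟩ := Nat.exists_eq_add_of_lt hm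
  rw [insertBlock, append_assoc, takeWhile_append_of_pos fun y hy => by
    simp only [ne_eq, decide_eq_true_eq]
    rintro rfl
    exact hx (mem_of_mem_take hy)]
  simp [replicate_succ]

end InsertBlock

theorem avoids212_iff_forall_sublist {w : List ℕ} :
    Avoids212 w ↔ ∀ a b, [b, a, b] <+ w → b ≤ a := by
  constructor
  · rintro h a b hab
    obtain ⟨is, his, hlt⟩ := sublist_eq_map_getElem hab
    obtain ⟨p, q, r, rfl⟩ := length_eq_three.1 (by simpa using (congrArg length his).symm)
    simp only [map_cons, map_nil, cons.injEq, and_true, Fin.getElem_fin] at his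
    simp only [pairwise_cons, mem_cons, not_mem_nil, or_false, forall_eq_or_imp, forall_eq,
      IsEmpty.forall_iff, implies_true, Pairwise.nil, and_self, and_true] at hlt
    obtain ⟨rfl, rfl, hpr⟩ := his
    by_contra! hqp
    exact h ⟨p, q, r, hlt.1.1, hlt.2, by simpa using hpr, by simpa using hqp⟩
  · rintro h ⟨p, q, r, hpq, hqr, hpr, hqp⟩
    have hsub := map_getElem_sublist (l := w) (is := [p, q, r]) (by simp [hpq, hqr, hpq.trans hqr])
    simp only [map_cons, map_nil, Fin.getElem_fin] at hsub
    simp only [get_eq_getElem] at hpr hqp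
    rw [← hpr] at hsub
    exact (h _ _ hsub).not_gt hqp

theorem Avoids212.sublist {v w : List ℕ} (hw : Avoids212 w) (hvw : v <+ w) : Avoids212 v :=
  avoids212_iff_forall_sublist.2 fun a b h => avoids212_iff_forall_sublist.1 hw a b (h.trans hvw)

theorem avoids212_insertBlock {u : List ℕ} {j m x : ℕ} (hu : Avoids212 u)
    (hx : ∀ y ∈ u, y < x) :
    Avoids212 (insertBlock u j m x) := by
  have hxu : x ∉ u := fun h => (hx x h).false
  refine avoids212_iff_forall_sublist.2 fun a b h => ?_
  by_cases hb : b = x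
  · subst hb
    rw [insertBlock] at h
    exact (eq_of_sublist_append_replicate_append (fun h' => hxu (mem_of_mem_take h'))
      (fun h' => hxu (mem_of_mem_drop h')) h).ge
  · have hbu : b ∈ u := by
      rw [← filter_insertBlock (j := j) (m := m) hxu]
      exact mem_filter.2 ⟨h.subset (by simp), by simpa using hb⟩
    by_contra! hab
    have hsub := h.filter (· ≠ x)
    rw [filter_insertBlock hxu, filter_eq_self.2 (by simp [hb, (hab.trans (hx b hbu)).ne])] at hsub
    exact hab.not_ge (avoids212_iff_forall_sublist.1 hu a b hsub)

theorem isSPerm_iff {s w : List ℕ} : IsSPerm s w ↔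
    (∀ x ∈ w, 1 ≤ x ∧ x ≤ s.length) ∧
      ∀ i (hi : i < s.length), w.count (i + 1) = s[i] := by
  simp [IsSPerm, Fin.forall_iff]

theorem isSPerm_nil_iff {w : List ℕ} : IsSPerm [] w ↔ w = [] := by
  refine ⟨fun h => eq_nil_iff_forall_not_mem.2 fun x hx => ?_, fun h => by simp [h, IsSPerm]⟩
  obtain ⟨hx₁, hx₀⟩ := h.1 x hx
  rw [length_nil] at hx₀
  omega

theorem IsSPerm.lt_of_mem {s w : List ℕ} (h : IsSPerm s w) {x : ℕ} (hx : x ∈ w) :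
    x < s.length + 1 :=
  Nat.lt_succ_of_le (h.1 x hx).2

theorem isSPerm_append_singleton_iff {t w : List ℕ} {m : ℕ} :
    IsSPerm (t ++ [m]) w ↔
      w.count (t.length + 1) = m ∧ IsSPerm t (w.filter (· ≠ t.length + 1)) := by
  have hcount : ∀ i < t.length,
      (w.filter (· ≠ t.length + 1)).count (i + 1) = w.count (i + 1) := fun i hi =>
    count_filter (by simp only [ne_eq, decide_eq_true_eq]; omega)
  simp only [isSPerm_iff, mem_filter, length_append, length_singleton]
  constructor
  · rintro ⟨hmem, hc⟩
    refine ⟨by simpa using hc t.length (by simp), fun x hx => ?_, fun i hi => ?_⟩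
    · have := hmem x hx.1
      simp only [ne_eq, decide_eq_true_eq] at hx
      omega
    · rw [hcount i hi, hc i (by omega), getElem_append_left hi]
  · rintro ⟨hm, hmem, hc⟩
    refine ⟨fun x hx => ?_, fun i hi => ?_⟩
    · by_cases hxt : x = t.length + 1
      · omega
      · have := hmem x ⟨hx, by simpa using hxt⟩
        omega
    · rcases Nat.lt_succ_iff_lt_or_eq.1 hi with hi | rfl
      · rw [← hcount i hi, hc i hi, getElem_append_left hi]
      · simpa using hm

theorem IsSPerm.length_eq_sum {s w : List ℕ} (h : IsSPerm s w) : w.length = s.sum := by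
  induction s using List.reverseRecOn generalizing w with
  | nil => simp [isSPerm_nil_iff.1 h]
  | append_singleton t m ih =>
    obtain ⟨hm, ht⟩ := isSPerm_append_singleton_iff.1 h
    rw [sum_append, sum_singleton, ← ih ht, ← hm, count_eq_length_filter,
      length_eq_length_filter_add (· == t.length + 1), Nat.add_comm]
    congr 3
    funext x
    simp only [ne_eq, decide_not, Bool.beq_eq_decide_eq]

theorem isSPerm_insertBlock {t u : List ℕ} (hu : IsSPerm t u) (j m : ℕ) :
    IsSPerm (t ++ [m]) (insertBlock u j m (t.length + 1)) := by
  have hx : t.length + 1 ∉ u := fun h => (hu.lt_of_mem h).false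
  exact isSPerm_append_singleton_iff.2
    ⟨count_insertBlock_self hx, by rwa [filter_insertBlock hx]⟩

abbrev StirlingPerm (s : List ℕ) : Type := {w : List ℕ // IsSPerm s w ∧ Avoids212 w}

theorem card_stirlingPerm_nil : Nat.card (StirlingPerm []) = 1 :=
  Nat.card_eq_one_iff_exists.2 ⟨⟨[], isSPerm_nil_iff.2 rfl, by rintro ⟨⟨_, ⟨⟩⟩, -⟩⟩,
    fun w => Subtype.ext (isSPerm_nil_iff.1 w.2.1)⟩

def insertTop (t : List ℕ) (m : ℕ) (p : StirlingPerm t × Fin (t.sum + 1)) :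
    StirlingPerm (t ++ [m]) :=
  ⟨insertBlock p.1.1 p.2 m (t.length + 1), isSPerm_insertBlock p.1.2.1 p.2 m,
    avoids212_insertBlock p.1.2.2 fun _ hy => p.1.2.1.lt_of_mem hy⟩

theorem insertTop_injective {t : List ℕ} {m : ℕ} (hm : 0 < m) :
    Function.Injective (insertTop t m) := by
  rintro ⟨⟨u, hu, _⟩, j⟩ ⟨⟨u', hu', _⟩, j'⟩ h
  have hx : t.length + 1 ∉ u := fun h => (hu.lt_of_mem h).false
  have hx' : t.length + 1 ∉ u' := fun h => (hu'.lt_of_mem h).false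
  have hins : insertBlock u j m (t.length + 1) = insertBlock u' j' m (t.length + 1) :=
    congrArg Subtype.val h
  obtain rfl : u = u' := by rw [← filter_insertBlock hx, hins, filter_insertBlock hx']
  have htake : u.take j = u.take j' := by
    rw [← takeWhile_insertBlock hx hm, hins, takeWhile_insertBlock hx hm]
  have hlen := congrArg length htake
  simp only [length_take, hu.length_eq_sum] at hlen
  have hj := j.isLt
  have hj' := j'.isLt
  simp only [Prod.mk.injEq, true_and]
  exact Fin.ext (by omega)

theorem insertTop_surjective (t : List ℕ) (m : ℕ) : Function.Surjective (insertTop t m) := by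
  rintro ⟨w, hw, hav⟩
  obtain ⟨hm, hu⟩ := isSPerm_append_singleton_iff.1 hw
  have hblock : ∀ y, [t.length + 1, y, t.length + 1] <+ w → y = t.length + 1 := fun y hy =>
    le_antisymm (by simpa using hw.lt_of_mem (hy.subset (mem_cons_of_mem _ mem_cons_self)))
      (avoids212_iff_forall_sublist.1 hav y _ hy)
  obtain ⟨u₁, u₂, hw_eq, h₁, h₂⟩ := exists_eq_append_replicate_append hblock
  have hfilter : w.filter (· ≠ t.length + 1) = u₁ ++ u₂ := by
    rw [hw_eq, ← insertBlock_append_length, filter_insertBlock (by simp [h₁, h₂])]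
  rw [hfilter] at hu
  have hj : u₁.length < t.sum + 1 := by
    rw [← hu.length_eq_sum, length_append]
    omega
  refine ⟨(⟨u₁ ++ u₂, hu, hfilter ▸ hav.sublist filter_sublist⟩, ⟨u₁.length, hj⟩), ?_⟩
  ext1
  simp only [insertTop, insertBlock_append_length]
  rw [← hm, ← hw_eq]

theorem card_stirlingPerm_append_singleton (t : List ℕ) {m : ℕ} (hm : 0 < m) :
    Nat.card (StirlingPerm (t ++ [m])) = Nat.card (StirlingPerm t) * (t.sum + 1) := by
  rw [← Nat.card_congr
      (Equiv.ofBijective _ ⟨insertTop_injective hm, insertTop_surjective t m⟩),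
    Nat.card_prod, Nat.card_fin]

theorem prod_sum_take_append_singleton (t : List ℕ) (m : ℕ) :
    ∏ k ∈ Finset.range (t ++ [m]).length, (((t ++ [m]).take k).sum + 1) =
      (∏ k ∈ Finset.range t.length, ((t.take k).sum + 1)) * (t.sum + 1) := by
  rw [length_append, length_singleton, Finset.prod_range_succ, take_left]
  congr 1
  exact Finset.prod_congr rfl fun k hk => by
    rw [take_append_of_le_length (Finset.mem_range.1 hk).le]

/-- The number of Stirling `s`-permutations equals
`∏_{k=1}^{a} (s(1) + ⋯ + s(k-1) + 1)`. -/
theorem card_stirling (s : List ℕ) (hs : ∀ x ∈ s, 0 < x) :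
    Nat.card {w : List ℕ // IsSPerm s w ∧ Avoids212 w} =
      ∏ k ∈ Finset.range s.length, ((s.take k).sum + 1) := by
  induction s using List.reverseRecOn with
  | nil => exact card_stirlingPerm_nil
  | append_singleton t m ih =>
    rw [card_stirlingPerm_append_singleton t (hs m (by simp)),
      ih fun x hx => hs x (by simp [hx]), prod_sum_take_append_singleton]
end

section
/- Let a and b be relatively prime positive integers and let s be the degree sequence of (a,b). Let μ = (μ(1),…,μ(a)) be a sequence of nonnegative integers with μ(1)+⋯+μ(a) = b−1, encoding the lattice path N E^{μ(1)} ⋯ N E^{μ(a)} E from (0,0) to (b,a). Then this path stays weakly above the diagonal y = (a/b)x, i.e., a·(μ(1)+⋯+μ(i)) ≤ b·i for all i ∈ [a], if and only if μ(1)+⋯+μ(i) ≤ (s(1)−1)+⋯+(s(i)−1) for all i ∈ [a]. -/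
/-- The degree sequence of a pair `(a, b)` of relatively prime positive integers:
`s(i) = ⌈b/a⌉ + 1` if `0 < (i·r mod a) < r` and `s(i) = ⌈b/a⌉` otherwise, where
`r = b mod a` and `i` ranges over `1, …, a` (here the entry for `i` is stored at
index `i - 1`). -/
def degSeq (a b : ℕ) : List ℕ :=
  (List.range a).map (fun k =>
    (⌈(b : ℚ) / a⌉).toNat +
      (if 0 < ((k + 1) * (b % a)) % a ∧ ((k + 1) * (b % a)) % a < b % a then 1 else 0))

theorem ceil_nat_div (a b : ℕ) (ha : 0 < a) :
    (⌈(b : ℚ) / a⌉).toNat = b / a + (if b % a = 0 then 0 else 1) := by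
  obtain ⟨q, r, hr, rfl⟩ : ∃ q r, r < a ∧ b = a * q + r :=
    ⟨b / a, b % a, Nat.mod_lt b ha, (Nat.div_add_mod b a).symm⟩
  rw [Nat.mul_add_div ha, Nat.mul_add_mod, Nat.div_eq_of_lt hr, Nat.mod_eq_of_lt hr]
  have ha' : (0:ℚ) < a := by exact_mod_cast ha
  have hra : ((r:ℚ)) < a := by exact_mod_cast hr
  rcases eq_or_ne r 0 with h0 | h0
  · subst h0
    simp only [if_pos rfl]
    have hz : (⌈((a * q + 0 : ℕ) : ℚ) / a⌉) = ((q + 0 + 0 : ℕ) : ℤ) := by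
      rw [Int.ceil_eq_iff]
      constructor
      · rw [lt_div_iff₀ ha']; push_cast; nlinarith
      · rw [div_le_iff₀ ha']; push_cast; nlinarith
    rw [hz, Int.toNat_natCast]; simp
  · have hr0 : (0:ℚ) < r := by exact_mod_cast Nat.pos_of_ne_zero h0
    simp only [if_neg h0]
    have hz : (⌈((a * q + r : ℕ) : ℚ) / a⌉) = ((q + 0 + 1 : ℕ) : ℤ) := by
      rw [Int.ceil_eq_iff]
      constructor
      · rw [lt_div_iff₀ ha']; push_cast; nlinarith
      · rw [div_le_iff₀ ha']; push_cast; nlinarith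
    rw [hz, Int.toNat_natCast]

theorem chi_step (a r : ℕ) (ha : 0 < a) (hra : r < a) (hcop : Nat.Coprime r a)
    (i : ℕ) (hi : i + 1 < a) :
    r * (i+1) / a = r * i / a +
      (if 0 < ((i+1) * r) % a ∧ ((i+1) * r) % a < r then 1 else 0) := by
  have hmod0 : ((i+1) * r) % a ≠ 0 := by
    intro h
    have hd : a ∣ (i+1) * r := Nat.dvd_of_mod_eq_zero h
    have hd2 : a ∣ (i+1) := (Nat.Coprime.dvd_of_dvd_mul_right hcop.symm) hd
    exact absurd (Nat.le_of_dvd (Nat.succ_pos i) hd2) (by omega)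
  have e1 : r * (i+1) = r * i + r := by ring
  have e2 : (i+1) * r = r * i + r := by ring
  rw [e2] at hmod0
  rw [e1, e2, Nat.add_div ha, Nat.div_eq_of_lt hra, Nat.mod_eq_of_lt hra]
  have hm : (r*i) % a < a := Nat.mod_lt _ ha
  have hmr : (r*i + r) % a = ((r*i)%a + r) % a := by
    conv_lhs => rw [Nat.add_mod, Nat.mod_eq_of_lt hra]
  rcases le_or_gt a ((r*i)%a + r) with hle | hlt
  · have h2 : ((r*i)%a + r) % a = (r*i)%a + r - a := by
      rw [Nat.mod_eq_sub_mod hle, Nat.mod_eq_of_lt (by omega)]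
    rw [hmr, h2] at hmod0 ⊢
    rw [if_pos hle, if_pos (by omega)]
  · rw [hmr, Nat.mod_eq_of_lt hlt] at hmod0 ⊢
    rw [if_neg (not_le.mpr hlt), if_neg (by omega)]

theorem chi_sum (a r : ℕ) (ha : 0 < a) (hra : r < a) (hcop : Nat.Coprime r a) :
    ∀ i, i < a → (∑ k ∈ Finset.range i,
      (if 0 < ((k+1) * r) % a ∧ ((k+1) * r) % a < r then 1 else 0)) = r * i / a := by
  intro i
  induction i with
  | zero => simp
  | succ n ih =>
    intro hn
    rw [Finset.sum_range_succ, ih (by omega), chi_step a r ha hra hcop n hn]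

theorem list_sum_range (g : ℕ → ℕ) (i : ℕ) :
    ((List.range i).map g).sum = ∑ k ∈ Finset.range i, g k := by
  induction i with
  | zero => simp
  | succ n ih =>
    rw [List.range_succ, List.map_append, List.sum_append, Finset.sum_range_succ, ih]; simp

theorem degSum (a b : ℕ) (ha2 : 2 ≤ a) (hb : 0 < b) (hab : Nat.Coprime a b) (i : ℕ)
    (hi : i ≤ a) :
    ∑ k ∈ Finset.range i, (((⌈(b : ℚ) / a⌉).toNat +
      (if 0 < ((k + 1) * (b % a)) % a ∧ ((k + 1) * (b % a)) % a < b % a then 1 else 0)) - 1)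
    = if i = a then b - 1 else b * i / a := by
  have ha : 0 < a := by omega
  set r := b % a with hrdef
  set q := b / a with hqdef
  clear_value r q
  have hqr : a * q + r = b := by rw [hqdef, hrdef]; exact Nat.div_add_mod b a
  have hra : r < a := by rw [hrdef]; exact Nat.mod_lt b ha
  have hr : 0 < r := by
    rcases Nat.eq_zero_or_pos r with h0 | h0
    · exfalso
      rw [hrdef] at h0
      have : a ∣ b := Nat.dvd_of_mod_eq_zero h0
      have h2 := Nat.dvd_gcd dvd_rfl this
      rw [hab] at h2
      have h3 := Nat.le_of_dvd one_pos h2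
      omega
    · exact h0
  have hcop : Nat.Coprime r a := by
    rw [Nat.Coprime, hrdef, ← Nat.gcd_rec]; exact hab
  have hc : (⌈(b : ℚ) / a⌉).toNat = q + 1 := by
    have h := ceil_nat_div a b ha
    rw [if_neg (show ¬ (b % a = 0) by omega)] at h
    omega
  have hterm : ∀ k : ℕ, ((⌈(b : ℚ) / a⌉).toNat +
      (if 0 < ((k + 1) * r) % a ∧ ((k + 1) * r) % a < r then 1 else 0)) - 1
      = q + (if 0 < ((k + 1) * r) % a ∧ ((k + 1) * r) % a < r then 1 else 0) := by
    intro k; rw [hc]; split <;> omega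
  have hS : ∀ j, j < a → ∑ k ∈ Finset.range j, (((⌈(b : ℚ) / a⌉).toNat +
      (if 0 < ((k + 1) * r) % a ∧ ((k + 1) * r) % a < r then 1 else 0)) - 1)
      = q * j + r * j / a := by
    intro j hj
    simp only [hterm]
    rw [Finset.sum_add_distrib, Finset.sum_const, Finset.card_range, smul_eq_mul,
      chi_sum a r ha hra hcop j hj, mul_comm]
  rcases eq_or_ne i a with heq | hne
  · rw [if_pos heq, heq]
    have ha1 : a - 1 < a := by omega
    rw [show a = (a - 1) + 1 by omega, Finset.sum_range_succ,
      show (a - 1) + 1 = a by omega]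
    rw [hS (a-1) ha1, Nat.mul_mod_right, if_neg (by omega), hc]
    have hdiv : r * (a - 1) / a = r - 1 := by
      have he : r * (a - 1) = a * (r - 1) + (a - r) := by
        zify [show 1 ≤ r from hr, show r ≤ a from le_of_lt hra, show 1 ≤ a from ha]
        ring
      rw [he, Nat.mul_add_div ha, Nat.div_eq_of_lt (by omega)]
      omega
    rw [hdiv]
    have h4 : q * (a - 1) + q = q * a := by
      zify [show 1 ≤ a from ha]; ring
    have h5 : q * a = a * q := mul_comm q a
    omega
  · rw [if_neg hne, hS i (by omega)]
    have : b * i = a * (q * i) + r * i := by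
      rw [← hqr]; ring
    rw [this, Nat.mul_add_div ha]

/-- Let `s` be the degree sequence of relatively prime positive integers `(a, b)` and
let `μ` encode a lattice path `N E^{μ(1)} ⋯ N E^{μ(a)} E` from `(0,0)` to `(b,a)`.
The path stays weakly above the diagonal `y = (a/b)x`, i.e.
`a·(μ(1)+⋯+μ(i)) ≤ b·i` for all `i ∈ [a]`, if and only if
`μ(1)+⋯+μ(i) ≤ (s(1)−1)+⋯+(s(i)−1)` for all `i ∈ [a]`. -/
theorem rational_path_iff_sDyck (a b : ℕ) (ha : 0 < a) (hb : 0 < b)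
    (hab : Nat.Coprime a b) (μ : List ℕ) (hlen : μ.length = a) (hsum : μ.sum = b - 1) :
    (∀ i, 1 ≤ i → i ≤ a → a * (μ.take i).sum ≤ b * i) ↔
      (∀ i, 1 ≤ i → i ≤ a →
        (μ.take i).sum ≤ (((degSeq a b).take i).map (fun x => x - 1)).sum) := by
  refine forall_congr' fun i => imp_congr_right fun h1 => imp_congr_right fun h2 => ?_
  have hrhs : (((degSeq a b).take i).map (fun x => x - 1)).sum
      = ∑ k ∈ Finset.range i, (((⌈(b : ℚ) / a⌉).toNat +
        (if 0 < ((k + 1) * (b % a)) % a ∧ ((k + 1) * (b % a)) % a < b % a then 1 else 0)) - 1) := by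
    rw [degSeq, ← List.map_take, List.take_range, min_eq_left h2, List.map_map,
      list_sum_range]
    rfl
  have htake_all : μ.take a = μ := List.take_of_length_le (by omega)
  rcases eq_or_lt_of_le (show 1 ≤ a from ha) with haeq | ha2
  · -- a = 1, so i = 1
    have : i = 1 := by omega
    subst this
    have ha1 : a = 1 := by omega
    subst ha1
    have hL : (1:ℕ) * (μ.take 1).sum ≤ b * 1 := by
      rw [htake_all, hsum]; omega
    have hR : (μ.take 1).sum ≤ (((degSeq 1 b).take 1).map (fun x => x - 1)).sum := by
      rw [htake_all, hsum, hrhs]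
      have : (⌈(b : ℚ) / (1:ℕ)⌉).toNat = b := by
        rw [ceil_nat_div 1 b one_pos]; simp [Nat.mod_one]
      simp [this, Nat.mod_one]
    exact iff_of_true hL hR
  · have ha2' : 2 ≤ a := ha2
    rcases eq_or_ne i a with heq | hne
    · -- both sides true
      have hL : a * (μ.take i).sum ≤ b * i := by
        rw [heq, htake_all, hsum, mul_comm b a]
        exact Nat.mul_le_mul_left a (by omega)
      have hR : (μ.take i).sum ≤ (((degSeq a b).take i).map (fun x => x - 1)).sum := by
        rw [hrhs, degSum a b ha2' hb hab i h2, if_pos heq, heq, htake_all, hsum]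
      exact iff_of_true hL hR
    · rw [hrhs, degSum a b ha2' hb hab i h2, if_neg hne,
        Nat.le_div_iff_mul_le ha, mul_comm]
end

section
/- For every composition s = (s(1),…,s(a)) with s(i) ≥ 2 for all i and every k ≥ 1, the number of s-Dyck paths with exactly k peaks (encoded by μ, the number of peaks is 1 + #{i ∈ [a−1] : μ(i) > 0}) equals the number of 312-avoiding Stirling (s−𝟏)-permutations with exactly k−1 ascents, where an ascent of a word w of length m is an index p ∈ [m−1] with w_p < w_{p+1}. -/
/-- The number of peaks of the `s`-Dyck path encoded by `μ`:
`1 + #{i ∈ [a-1] : μ(i) > 0}`. -/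
def peaks (μ : List ℕ) : ℕ :=
  1 + (μ.dropLast.filter (fun m => m ≠ 0)).length

/-- `w` avoids the pattern 312: there are no positions `p < q < r` with
`w_q < w_r < w_p`. -/
def Avoids312 (w : List ℕ) : Prop :=
  ¬ ∃ p q r : Fin w.length, p < q ∧ q < r ∧ w.get q < w.get r ∧ w.get r < w.get p

/-- The number of ascents of a word `w`: the number of positions `p ∈ [m-1]`
with `w_p < w_{p+1}`. -/
def ascents (w : List ℕ) : ℕ :=
  ((List.range (w.length - 1)).filter (fun p => w.getD p 0 < w.getD (p + 1) 0)).length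

namespace Narayana

open Finset

lemma sum_map_sub_one_add_length {s : List ℕ} (hs : ∀ x ∈ s, 1 ≤ x) :
    (s.map (· - 1)).sum + s.length = s.sum := by
  induction s with
  | nil => rfl
  | cons x s ih =>
    simp only [List.map_cons, List.sum_cons, List.length_cons, List.forall_mem_cons] at hs ⊢
    have := ih hs.2
    omega

lemma countP_le_add_one (l : List ℕ) (i : ℕ) :
    l.countP (· ≤ i + 1) = l.countP (· ≤ i) + l.count (i + 1) := by
  induction l with
  | nil => rfl
  | cons x l ih =>
    simp only [List.countP_cons, List.count_cons, ih, beq_iff_eq, decide_eq_true_eq]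
    split_ifs <;> omega

lemma ascents_cons_cons (x y : ℕ) (u : List ℕ) :
    ascents (x :: y :: u) = (if x < y then 1 else 0) + ascents (y :: u) := by
  simp only [ascents, ← List.countP_eq_length_filter, List.length_cons, Nat.add_sub_cancel,
    List.range_succ_eq_map, List.countP_cons, List.countP_map]
  simp [Function.comp_def, add_comm]

/-! ### Letter counts -/

def letterCounts (a : ℕ) (l : List ℕ) : List ℕ :=
  (List.range a).map fun i => l.count (i + 1)

@[simp] lemma length_letterCounts (a : ℕ) (l : List ℕ) : (letterCounts a l).length = a := by
  simp [letterCounts]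

lemma letterCounts_add_one (a : ℕ) (l : List ℕ) :
    letterCounts (a + 1) l = letterCounts a l ++ [l.count (a + 1)] := by
  simp [letterCounts, List.range_succ]

lemma take_letterCounts (d a : ℕ) (l : List ℕ) :
    (letterCounts a l).take d = letterCounts (min d a) l := by
  simp [letterCounts, ← List.map_take, List.take_range]

lemma sum_letterCounts {l : List ℕ} (hl : ∀ x ∈ l, 1 ≤ x) (a : ℕ) :
    (letterCounts a l).sum = l.countP (· ≤ a) := by
  induction a with
  | zero =>
    simp only [letterCounts, List.range_zero, List.map_nil, List.sum_nil]
    refine (List.countP_eq_zero.2 fun x hx => ?_).symm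
    have := hl x hx
    simp only [decide_eq_true_eq]
    omega
  | succ a ih => rw [letterCounts_add_one, List.sum_append, ih, countP_le_add_one]; simp

lemma countP_ne_zero_letterCounts {l : List ℕ} (hl : ∀ x ∈ l, 1 ≤ x) (a : ℕ) :
    (letterCounts a l).countP (· ≠ 0) = l.dedup.countP (· ≤ a) := by
  induction a with
  | zero =>
    simp only [letterCounts, List.range_zero, List.map_nil, List.countP_nil]
    refine (List.countP_eq_zero.2 fun x hx => ?_).symm
    have := hl x (List.mem_dedup.1 hx)
    simp only [decide_eq_true_eq]
    omega
  | succ a ih =>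
    rw [letterCounts_add_one, List.countP_append, ih, countP_le_add_one, List.count_dedup]
    simp [List.count_eq_zero]

lemma letterCounts_of_isSPerm {t w : List ℕ} (hw : IsSPerm t w) : letterCounts t.length w = t :=
  List.ext_getElem (by simp) fun i _ hi => by simpa [letterCounts] using hw.2 ⟨i, hi⟩

lemma perm_of_letterCounts_eq {a : ℕ} {l l' : List ℕ} (hl : ∀ x ∈ l, 1 ≤ x ∧ x ≤ a)
    (hl' : ∀ x ∈ l', 1 ≤ x ∧ x ≤ a) (h : letterCounts a l = letterCounts a l') : l.Perm l' := by
  refine List.perm_iff_count.2 fun v => ?_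
  by_cases hv : 1 ≤ v ∧ v ≤ a
  · have := congrArg (·[v - 1]?) h
    simpa [letterCounts, show v - 1 < a by omega, show v - 1 + 1 = v by omega] using this
  · rw [List.count_eq_zero.2 fun hm => hv (hl v hm), List.count_eq_zero.2 fun hm => hv (hl' v hm)]

lemma length_dedup_eq_one_add_ascents {l : List ℕ} (hl : l.Pairwise (· ≤ ·)) (hne : l ≠ []) :
    l.dedup.length = 1 + ascents l := by
  induction l with
  | nil => exact absurd rfl hne
  | cons x u ih =>
    cases u with
    | nil => simp [ascents]
    | cons y v =>
      obtain ⟨hx, hyv⟩ := List.pairwise_cons.1 hl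
      rw [ascents_cons_cons, add_left_comm, ← ih hyv (List.cons_ne_nil _ _)]
      by_cases hxy : x < y
      · have hnot : x ∉ y :: v := fun hm => by have := List.pairwise_cons.1 hyv; grind
        simp [List.dedup_cons_of_notMem hnot, hxy, add_comm]
      · have : x = y := le_antisymm (hx y (by simp)) (not_lt.1 hxy)
        simp [List.dedup_cons_of_mem (show x ∈ y :: v by simp [this]), hxy]

lemma sum_letterCounts_eq_length {a : ℕ} {l : List ℕ} (hl : ∀ x ∈ l, 1 ≤ x ∧ x ≤ a) :
    (letterCounts a l).sum = l.length := by
  rw [sum_letterCounts (fun x hx => (hl x hx).1), List.countP_eq_length]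
  simpa using fun x hx => (hl x hx).2

lemma peaks_letterCounts {a : ℕ} {l : List ℕ} (hl : l.Pairwise (· ≤ ·))
    (hb : ∀ x ∈ l, 1 ≤ x ∧ x ≤ a) (ha : l ≠ [] → a ∈ l) :
    peaks (letterCounts a l) = 1 + ascents l := by
  rcases eq_or_ne l [] with rfl | hne
  · simp [peaks, letterCounts, ascents]
  obtain ⟨a, rfl⟩ : ∃ a', a = a' + 1 := ⟨a - 1, by have := (hb _ (ha hne)).1; omega⟩
  have hcount := countP_le_add_one l.dedup a
  rw [List.count_dedup, if_pos (ha hne), List.countP_eq_length.2 fun x hx => by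
    simpa using (hb x (List.mem_dedup.1 hx)).2] at hcount
  rw [peaks, letterCounts_add_one, List.dropLast_concat, ← List.countP_eq_length_filter,
    countP_ne_zero_letterCounts (fun x hx => (hb x hx).1)]
  have := length_dedup_eq_one_add_ascents hl hne
  omega

/-! ### Running maxima -/

def prefixMax : ℕ → List ℕ → List ℕ
  | _, [] => []
  | h, x :: xs => max h x :: prefixMax (max h x) xs

@[simp] lemma prefixMax_nil (h : ℕ) : prefixMax h [] = [] := rfl

@[simp] lemma prefixMax_cons (h x : ℕ) (xs : List ℕ) :
    prefixMax h (x :: xs) = max h x :: prefixMax (max h x) xs := rfl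

@[simp] lemma length_prefixMax (h : ℕ) (w : List ℕ) : (prefixMax h w).length = w.length := by
  induction w generalizing h <;> simp [*]

lemma exists_eq_max_of_mem_prefixMax {h y : ℕ} {w : List ℕ} (hy : y ∈ prefixMax h w) :
    ∃ x ∈ w, y = max h x := by
  induction w generalizing h with
  | nil => simp at hy
  | cons x xs ih =>
    rcases List.mem_cons.1 hy with rfl | hy
    · exact ⟨x, by simp, rfl⟩
    · obtain ⟨x', hx', rfl⟩ := ih hy
      rcases le_total x x' with hxx' | hxx'
      · exact ⟨x', by simp [hx'], by omega⟩
      · exact ⟨x, by simp, by omega⟩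

lemma prefixMax_zero_subset (w : List ℕ) : prefixMax 0 w ⊆ w := fun y hy => by
  obtain ⟨x, hx, rfl⟩ := exists_eq_max_of_mem_prefixMax hy
  simpa using hx

lemma pairwise_prefixMax (h : ℕ) (w : List ℕ) : (prefixMax h w).Pairwise (· ≤ ·) := by
  induction w generalizing h with
  | nil => simp
  | cons x xs ih =>
    refine List.pairwise_cons.2 ⟨fun y hy => ?_, ih _⟩
    obtain ⟨x', -, rfl⟩ := exists_eq_max_of_mem_prefixMax hy
    exact le_max_left _ _

lemma mem_prefixMax_of_forall_le {h a : ℕ} {w : List ℕ} (ha : a ∈ w) (hw : ∀ x ∈ w, x ≤ a)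
    (hh : h ≤ a) : a ∈ prefixMax h w := by
  induction w generalizing h with
  | nil => simp at ha
  | cons x xs ih =>
    rcases List.mem_cons.1 ha with rfl | ha
    · simp [hh]
    · have := hw x (by simp)
      exact List.mem_cons_of_mem _ (ih ha (fun y hy => hw y (by simp [hy])) (by omega))

lemma countP_prefixMax_le (h i : ℕ) (w : List ℕ) :
    (prefixMax h w).countP (· ≤ i) ≤ w.countP (· ≤ i) := by
  induction w generalizing h with
  | nil => simp
  | cons x xs ih =>
    have := ih (max h x)
    simp only [prefixMax_cons, List.countP_cons, decide_eq_true_eq]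
    split_ifs <;> omega

/-! ### Words avoiding 212 and 312 -/

/-- `h` stands for the running maximum of a preceding prefix; `RisesAbove 0` is the avoidance of
212 and 312 (`avoids212_and_avoids312_iff`). -/
def RisesAbove (h : ℕ) (w : List ℕ) : Prop :=
  ∀ j q r, j ≤ q → q < r → r < w.length → w.getD q 0 < w.getD r 0 →
    h < w.getD r 0 ∧ w.getD j 0 < w.getD r 0

lemma avoids212_and_avoids312_iff (w : List ℕ) :
    Avoids212 w ∧ Avoids312 w ↔ RisesAbove 0 w := by
  constructor
  · rintro ⟨h212, h312⟩ j q r hjq hqr hr hlt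
    have hq : q < w.length := hqr.trans hr
    rw [List.getD_eq_getElem _ _ hq, List.getD_eq_getElem _ _ hr] at hlt
    rw [List.getD_eq_getElem _ _ (hjq.trans_lt hq), List.getD_eq_getElem _ _ hr]
    refine ⟨by omega, ?_⟩
    rcases hjq.lt_or_eq with hjq | rfl
    · by_contra! hle
      rcases hle.lt_or_eq with hgt | heq
      · exact h312 ⟨⟨j, _⟩, ⟨q, hq⟩, ⟨r, hr⟩, hjq, hqr, hlt, hgt⟩
      · exact h212 ⟨⟨j, _⟩, ⟨q, hq⟩, ⟨r, hr⟩, hjq, hqr, heq.symm,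
          by simp only [List.get_eq_getElem]; omega⟩
    · exact hlt
  · intro hw
    have key : ∀ p q r : Fin w.length, p < q → q < r → w.get q < w.get r → w.get p < w.get r :=
      fun p q r hpq hqr hlt => by
        simpa [List.getD_eq_getElem] using (hw p q r hpq.le hqr r.isLt (by simpa using hlt)).2
    refine ⟨fun ⟨p, q, r, hpq, hqr, heq, hlt⟩ => ?_, fun ⟨p, q, r, hpq, hqr, hlt, hgt⟩ => ?_⟩
    · exact (key p q r hpq hqr (heq ▸ hlt)).ne heq
    · exact (key p q r hpq hqr hlt).not_gt hgt

lemma risesAbove_nil (h : ℕ) : RisesAbove h [] := fun _ _ _ _ _ hr => by simp at hr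

lemma RisesAbove.mono {h h' : ℕ} {w : List ℕ} (hw : RisesAbove h w) (hh : h' ≤ h) :
    RisesAbove h' w := fun j q r hjq hqr hr hlt => by
  have := hw j q r hjq hqr hr hlt
  omega

lemma risesAbove_cons_iff {h x : ℕ} {u : List ℕ} :
    RisesAbove h (x :: u) ↔ RisesAbove (max h x) u ∧ ∀ y ∈ u, y ≤ h → y ≤ x := by
  constructor
  · intro hw
    refine ⟨fun j q r hjq hqr hr hlt => ?_, fun y hy hyh => ?_⟩
    · have h₁ := hw (j + 1) (q + 1) (r + 1) (by omega) (by omega) (by simpa using hr)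
      have h₂ := hw 0 (q + 1) (r + 1) (by omega) (by omega) (by simpa using hr)
      simp only [List.getD_cons_succ, List.getD_cons_zero] at h₁ h₂
      have := h₁ hlt
      have := h₂ hlt
      omega
    · obtain ⟨r, hr, rfl⟩ := List.getElem_of_mem hy
      by_contra! hxy
      have := hw 0 0 (r + 1) le_rfl (by omega) (by simpa using hr)
      rw [List.getD_cons_succ, List.getD_cons_zero, List.getD_eq_getElem _ _ hr] at this
      exact (this hxy).1.not_ge hyh
  · rintro ⟨hu, hle⟩ j q r hjq hqr hr hlt
    obtain ⟨r, rfl⟩ : ∃ r', r = r' + 1 := ⟨r - 1, by omega⟩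
    have hr' : r < u.length := by simpa using hr
    have hmem : u.getD r 0 ∈ u := List.getD_eq_getElem _ _ hr' ▸ List.getElem_mem hr'
    simp only [List.getD_cons_succ] at hlt ⊢
    cases q with
    | zero =>
      obtain rfl : j = 0 := by omega
      simp only [List.getD_cons_zero] at hlt ⊢
      exact ⟨lt_of_not_ge fun hh => (hle _ hmem hh).not_gt hlt, hlt⟩
    | succ q =>
      simp only [List.getD_cons_succ] at hlt
      have := hu 0 q r (Nat.zero_le _) (by omega) hr' hlt
      cases j with
      | zero => simp only [List.getD_cons_zero]; omega
      | succ j =>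
        simp only [List.getD_cons_succ]
        have := hu j q r (by omega) (by omega) hr' hlt
        omega

lemma ascents_prefixMax {h : ℕ} {w : List ℕ} (hw : RisesAbove h w) :
    ascents (prefixMax h w) = ascents w := by
  induction w generalizing h with
  | nil => rfl
  | cons x u ih =>
    obtain ⟨hu, hle⟩ := risesAbove_cons_iff.1 hw
    cases u with
    | nil => rfl
    | cons y v =>
      have hy : max h x < y ↔ x < y := by
        have := hle y (by simp)
        constructor <;> intro <;> omega
      rw [prefixMax_cons, prefixMax_cons, ascents_cons_cons, ascents_cons_cons, ← prefixMax_cons,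
        ih hu]
      simp [hy]

lemma eq_of_prefixMax_eq {h : ℕ} {w w' : List ℕ} (hw : RisesAbove h w) (hw' : RisesAbove h w')
    (hperm : w.Perm w') (heq : prefixMax h w = prefixMax h w') : w = w' := by
  induction w generalizing h w' with
  | nil => exact hperm.nil_eq
  | cons x u ih =>
    cases w' with
    | nil => exact hperm.eq_nil
    | cons x' u' =>
      obtain ⟨hu, hle⟩ := risesAbove_cons_iff.1 hw
      obtain ⟨hu', hle'⟩ := risesAbove_cons_iff.1 hw'
      simp only [prefixMax_cons, List.cons.injEq] at heq
      obtain ⟨hmax, htail⟩ := heq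
      obtain rfl : x = x' := by
        by_cases hxh : x ≤ h ∧ x' ≤ h
        · -- each head is then the largest letter `≤ h` of the common multiset
          have h₁ : x' ≤ x := by
            rcases List.mem_cons.1 (hperm.mem_iff.2 (List.mem_cons_self ..)) with rfl | hx'
            exacts [le_rfl, hle _ hx' hxh.2]
          have h₂ : x ≤ x' := by
            rcases List.mem_cons.1 (hperm.mem_iff.1 (List.mem_cons_self ..)) with rfl | hx
            exacts [le_rfl, hle' _ hx hxh.1]
          omega
        · omega
      rw [ih hu hu' hperm.cons_inv htail]

/-! ### From words to paths -/

def pathOfWord (a : ℕ) (w : List ℕ) : List ℕ := letterCounts a (prefixMax 0 w)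

def DominatedBy (μ t : List ℕ) : Prop :=
  μ.length = t.length ∧ μ.sum = t.sum ∧ ∀ d, (μ.take d).sum ≤ (t.take d).sum

lemma isDyck_iff_dominatedBy {s μ : List ℕ} (hs : ∀ x ∈ s, 1 ≤ x) :
    IsDyck s μ ↔ DominatedBy μ (s.map (· - 1)) := by
  have hsum := sum_map_sub_one_add_length hs
  simp only [IsDyck, DominatedBy, List.length_map, ← List.map_take]
  refine and_congr_right fun hlen => ?_
  rw [show μ.sum + s.length = s.sum ↔ μ.sum = (s.map (· - 1)).sum by omega]
  refine and_congr_right fun hμ => ⟨fun h d => ?_, fun h i _ => h i⟩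
  rcases le_total d s.length with hd | hd
  · exact h d hd
  · rw [List.take_of_length_le (by omega), List.take_of_length_le hd]
    omega

lemma length_mem_of_isSPerm {t w : List ℕ} (ht : ∀ x ∈ t, 0 < x) (hw : IsSPerm t w)
    (hne : w ≠ []) : t.length ∈ w := by
  obtain ⟨x, hx⟩ := List.exists_mem_of_ne_nil w hne
  have hlen : 0 < t.length := by have := hw.1 x hx; omega
  have := hw.2 ⟨t.length - 1, by omega⟩
  rw [Nat.sub_add_cancel hlen] at this
  exact List.count_pos_iff.1 (this ▸ ht _ (List.get_mem _ _))

lemma dominatedBy_pathOfWord {t w : List ℕ} (hw : IsSPerm t w) :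
    DominatedBy (pathOfWord t.length w) t := by
  have hb : ∀ y ∈ prefixMax 0 w, 1 ≤ y ∧ y ≤ t.length := fun y hy =>
    hw.1 y (prefixMax_zero_subset w hy)
  refine ⟨by simp [pathOfWord], ?_, fun d => ?_⟩
  · rw [pathOfWord, sum_letterCounts_eq_length hb, ← letterCounts_of_isSPerm hw,
      sum_letterCounts_eq_length hw.1, length_prefixMax]
  · conv_rhs => rw [← letterCounts_of_isSPerm hw]
    rw [pathOfWord, take_letterCounts, take_letterCounts,
      sum_letterCounts (fun y hy => (hb y hy).1), sum_letterCounts (fun y hy => (hw.1 y hy).1)]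
    exact countP_prefixMax_le ..

lemma peaks_pathOfWord {t w : List ℕ} (ht : ∀ x ∈ t, 0 < x) (hw : IsSPerm t w)
    (hr : RisesAbove 0 w) : peaks (pathOfWord t.length w) = 1 + ascents w := by
  rw [pathOfWord, peaks_letterCounts (pairwise_prefixMax 0 w)
    (fun y hy => hw.1 y (prefixMax_zero_subset w hy)), ascents_prefixMax hr]
  intro hne
  refine mem_prefixMax_of_forall_le (length_mem_of_isSPerm ht hw ?_) (fun x hx => (hw.1 x hx).2)
    (Nat.zero_le _)
  rintro rfl
  exact hne rfl

lemma eq_of_pathOfWord_eq {t w w' : List ℕ} (hw : IsSPerm t w) (hw' : IsSPerm t w')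
    (hr : RisesAbove 0 w) (hr' : RisesAbove 0 w')
    (h : pathOfWord t.length w = pathOfWord t.length w') : w = w' := by
  have hperm : w.Perm w' := perm_of_letterCounts_eq hw.1 hw'.1
    (by rw [letterCounts_of_isSPerm hw, letterCounts_of_isSPerm hw'])
  refine eq_of_prefixMax_eq hr hr' hperm ?_
  exact (perm_of_letterCounts_eq (fun y hy => hw.1 y (prefixMax_zero_subset w hy))
    (fun y hy => hw'.1 y (prefixMax_zero_subset w' hy)) h).eq_of_pairwise'
    (pairwise_prefixMax 0 w) (pairwise_prefixMax 0 w')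

/-! ### The greedy inverse -/

def stairs (i : ℕ) : List ℕ → List ℕ
  | [] => []
  | m :: μ => List.replicate m i ++ stairs (i + 1) μ

lemma count_stairs (i v : ℕ) (μ : List ℕ) :
    (stairs i μ).count v = if i ≤ v then μ.getD (v - i) 0 else 0 := by
  induction μ generalizing i with
  | nil => simp [stairs]
  | cons m μ ih =>
    rw [stairs, List.count_append, List.count_replicate, ih]
    rcases lt_trichotomy v i with hv | rfl | hv
    · simp [hv.ne', hv.not_ge, show ¬ i + 1 ≤ v by omega]
    · simp
    · rw [show v - i = v - (i + 1) + 1 by omega, List.getD_cons_succ]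
      simp [hv.ne, hv.le, show i + 1 ≤ v by omega]

lemma letterCounts_stairs (μ : List ℕ) : letterCounts μ.length (stairs 1 μ) = μ :=
  List.ext_getElem (by simp) fun j _ hj => by
    simp [letterCounts, count_stairs, List.getElem?_eq_getElem hj]

def spend (c : ℕ → ℕ) (x : ℕ) : ℕ → ℕ := Function.update c x (c x - 1)

lemma sum_spend {c : ℕ → ℕ} {x N : ℕ} (hx : x < N) (hc : c x ≠ 0) :
    ∑ y ∈ range N, spend c x y + 1 = ∑ y ∈ range N, c y := by
  have hmem : x ∈ range N := mem_range.2 hx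
  rw [spend, sum_update_of_mem hmem, ← add_sum_erase _ _ hmem, sdiff_singleton_eq_erase]
  omega

/-- `0` when the stock `c` has no letter `≤ i` left. -/
abbrev largestAvailable (c : ℕ → ℕ) (i : ℕ) : ℕ := Nat.findGreatest (c · ≠ 0) i

/-- The running maximum is `i + j` while `μ(j)` is being spent; each unit places the largest
letter `≤ i + j` left in the stock `c`. -/
def greedyWord (c : ℕ → ℕ) (i : ℕ) : List ℕ → List ℕ
  | [] => []
  | 0 :: μ => greedyWord c (i + 1) μ
  | (m + 1) :: μ =>
    largestAvailable c i :: greedyWord (spend c (largestAvailable c i)) i (m :: μ)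
termination_by μ => (μ.length, μ.headD 0)

/-- The stock `c` of letters `1, 2, …` is exactly what `greedyWord c i μ` consumes. -/
structure GreedyInv (c : ℕ → ℕ) (i : ℕ) (μ : List ℕ) : Prop where
  zero : c 0 = 0
  avail : ∀ d, (μ.take d).sum ≤ ∑ x ∈ range (i + d), c x
  total : μ.sum = ∑ x ∈ range (i + μ.length), c x
  supp : ∀ x, i + μ.length ≤ x → c x = 0
  upper : ∀ x, i < x → x < i + μ.length → c x ≠ 0

section GreedyInv

variable {c : ℕ → ℕ} {i m : ℕ} {μ : List ℕ}

lemma GreedyInv.skip (hc : GreedyInv c i (0 :: μ)) : GreedyInv c (i + 1) μ where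
  zero := hc.zero
  avail d := by simpa [add_assoc, add_comm 1] using hc.avail (d + 1)
  total := by simpa [add_assoc, add_comm 1] using hc.total
  supp x hx := hc.supp x (by rw [List.length_cons]; omega)
  upper x hx₁ hx₂ := hc.upper x (by omega) (by rw [List.length_cons]; omega)

lemma GreedyInv.largestAvailable_spec (hc : GreedyInv c i ((m + 1) :: μ)) :
    largestAvailable c i ≠ 0 ∧ c (largestAvailable c i) ≠ 0 := by
  have hpos : ∑ x ∈ range (i + 1), c x ≠ 0 := by
    have := hc.avail 1
    simp only [List.take_succ_cons, List.take_zero, List.sum_cons, List.sum_nil] at this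
    omega
  obtain ⟨x, hx, hcx⟩ := exists_ne_zero_of_sum_ne_zero hpos
  have hspec : c (largestAvailable c i) ≠ 0 :=
    Nat.findGreatest_spec (P := (c · ≠ 0)) (by simpa [Nat.lt_succ_iff] using hx) hcx
  exact ⟨fun h0 => hspec (h0 ▸ hc.zero), hspec⟩

lemma GreedyInv.place (hc : GreedyInv c i ((m + 1) :: μ)) :
    GreedyInv (spend c (largestAvailable c i)) i (m :: μ) := by
  obtain ⟨hx0, hcx⟩ := hc.largestAvailable_spec
  have hxi : largestAvailable c i ≤ i := Nat.findGreatest_le i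
  have hsum : ∀ N, i < N → ∑ y ∈ range N, spend c (largestAvailable c i) y + 1 =
      ∑ y ∈ range N, c y := fun N hN => sum_spend (by omega) hcx
  refine ⟨?_, fun d => ?_, ?_, fun x hx => ?_, fun x hx₁ hx₂ => ?_⟩
  · simpa [spend, Function.update_of_ne (Ne.symm hx0)] using hc.zero
  · cases d with
    | zero => simp
    | succ d =>
      have := hc.avail (d + 1)
      have := hsum (i + (d + 1)) (by omega)
      simp only [List.take_succ_cons, List.sum_cons] at *
      omega
  · have := hc.total
    have := hsum (i + (μ.length + 1)) (by omega)
    simp only [List.sum_cons, List.length_cons] at *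
    omega
  · have := hc.supp x (by simpa using hx)
    simpa [spend, Function.update_of_ne (show x ≠ largestAvailable c i by rw [List.length_cons] at hx; omega)]
  · have := hc.upper x hx₁ (by simpa using hx₂)
    simpa [spend, Function.update_of_ne (show x ≠ largestAvailable c i by omega)]

lemma count_greedyWord (hc : GreedyInv c i μ) (y : ℕ) :
    (greedyWord c i μ).count y = c y := by
  induction c, i, μ using greedyWord.induct with
  | case1 c i =>
    rw [greedyWord, List.count_nil]
    rcases lt_or_ge y i with hy | hy
    · have := hc.total
      simp only [List.sum_nil, List.length_nil, add_zero] at this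
      exact ((sum_eq_zero_iff.1 this.symm) y (mem_range.2 hy)).symm
    · exact (hc.supp y (by simpa using hy)).symm
  | case2 c i μ ih => rw [greedyWord, ih hc.skip]
  | case3 c i m μ ih =>
    rw [greedyWord, List.count_cons, ih hc.place, spend]
    have := hc.largestAvailable_spec.2
    rcases eq_or_ne y (largestAvailable c i) with rfl | hy
    · simp only [Function.update_self, beq_self_eq_true, if_true]
      omega
    · simp [Function.update_of_ne hy, Ne.symm hy]

lemma risesAbove_greedyWord (hc : GreedyInv c i μ) :
    RisesAbove i (greedyWord c i μ) := by
  induction c, i, μ using greedyWord.induct with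
  | case1 c i => rw [greedyWord]; exact risesAbove_nil i
  | case2 c i μ ih => rw [greedyWord]; exact (ih hc.skip).mono (Nat.le_succ i)
  | case3 c i m μ ih =>
    rw [greedyWord, risesAbove_cons_iff, max_eq_left (Nat.findGreatest_le i)]
    refine ⟨ih hc.place, fun y hy hyi => Nat.le_findGreatest hyi fun hcy => ?_⟩
    have := List.count_pos_iff.2 hy
    rw [count_greedyWord hc.place, spend, Function.update_apply] at this
    split_ifs at this with hyx
    · subst hyx; omega
    · omega

lemma prefixMax_greedyWord (hc : GreedyInv c i μ) {h : ℕ} (hh : h ≤ i) (hci : h < i → c i ≠ 0) :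
    prefixMax h (greedyWord c i μ) = stairs i μ := by
  induction c, i, μ using greedyWord.induct generalizing h with
  | case1 c i => simp [greedyWord, stairs]
  | case2 c i μ ih =>
    rw [greedyWord, stairs, List.replicate_zero, List.nil_append]
    cases μ with
    | nil => simp [greedyWord, stairs]
    | cons m μ => exact ih hc.skip (by omega) fun _ => hc.upper (i + 1) (by omega) (by simp)
  | case3 c i m μ ih =>
    have hmax : max h (largestAvailable c i) = i := by
      rcases hh.lt_or_eq with hh | rfl
      · have : largestAvailable c i = i := Nat.findGreatest_eq (hci hh)
        rw [this, max_eq_right hh.le]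
      · exact max_eq_left (Nat.findGreatest_le h)
    rw [greedyWord, prefixMax_cons, hmax, ih hc.place le_rfl (absurd · (lt_irrefl i))]
    simp [stairs, List.replicate_succ]

end GreedyInv

lemma sum_range_getD (t : List ℕ) (d : ℕ) : ∑ x ∈ range d, t.getD x 0 = (t.take d).sum := by
  induction t generalizing d with
  | nil => simp
  | cons x t ih =>
    cases d with
    | zero => simp
    | succ d =>
      rw [sum_range_succ', List.take_succ_cons, List.sum_cons]
      simp only [List.getD_cons_succ, List.getD_cons_zero, ih, add_comm]

/-- Letter `x ≥ 1` is in stock `t(x - 1)` times; there is no letter `0`. -/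
lemma greedyInv_init {t μ : List ℕ} (ht : ∀ x ∈ t, 0 < x) (hμ : DominatedBy μ t) :
    GreedyInv (fun x => (0 :: t).getD x 0) 1 μ := by
  obtain ⟨hlen, hsum, htake⟩ := hμ
  have hstock : ∀ d, ∑ x ∈ range (1 + d), (0 :: t).getD x 0 = (t.take d).sum := fun d => by
    rw [add_comm, sum_range_succ', ← sum_range_getD]
    simp
  refine ⟨rfl, fun d => hstock d ▸ htake d, ?_, fun x hx => ?_, fun x hx₁ hx₂ => ?_⟩
  · rw [hstock, hlen, List.take_length, hsum]
  · exact List.getD_eq_default _ _ (by rw [List.length_cons]; omega)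
  · obtain ⟨x, rfl⟩ : ∃ x', x = x' + 1 := ⟨x - 1, by omega⟩
    have hx : x < t.length := by omega
    show (0 :: t).getD (x + 1) 0 ≠ 0
    rw [List.getD_cons_succ, List.getD_eq_getElem _ _ hx]
    exact (ht _ (List.getElem_mem hx)).ne'

lemma exists_pathOfWord_eq {t μ : List ℕ} (ht : ∀ x ∈ t, 0 < x) (hμ : DominatedBy μ t) :
    ∃ w, IsSPerm t w ∧ RisesAbove 0 w ∧ pathOfWord t.length w = μ := by
  have hc := greedyInv_init ht hμ
  have hcount := count_greedyWord hc
  set w := greedyWord (fun x => (0 :: t).getD x 0) 1 μ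
  have hletters : ∀ x ∈ w, 1 ≤ x ∧ x ≤ t.length := fun x hx => by
    have := hcount x ▸ List.count_pos_iff.2 hx
    refine ⟨Nat.pos_of_ne_zero fun h0 => by simp [h0] at this, not_lt.1 fun hlt => ?_⟩
    rw [List.getD_eq_default _ _ (by rw [List.length_cons]; omega)] at this
    exact this.false
  refine ⟨w, ⟨hletters, fun j => by simp [hcount]⟩,
    (risesAbove_greedyWord hc).mono (Nat.zero_le 1), ?_⟩
  have hstart : prefixMax 0 w = prefixMax 1 w := by
    cases hw : w with
    | nil => rfl
    | cons x u => simp [max_eq_right (hletters x (hw ▸ List.mem_cons_self ..)).1]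
  rw [pathOfWord, hstart, prefixMax_greedyWord hc le_rfl (absurd · (lt_irrefl 1)), ← hμ.1,
    letterCounts_stairs]

end Narayana

open Narayana in
/-- The `s`-Narayana equality: for every composition `s` with entries at least 2 and
every `k ≥ 1`, the number of `s`-Dyck paths with exactly `k` peaks equals the number of
312-avoiding Stirling `(s-𝟏)`-permutations with exactly `k - 1` ascents. -/
theorem narayana_paths_permutations (s : List ℕ) (hs : ∀ x ∈ s, 2 ≤ x) (k : ℕ) (hk : 1 ≤ k) :
    Nat.card {μ : List ℕ // IsDyck s μ ∧ peaks μ = k} =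
      Nat.card {w : List ℕ // IsSPerm (s.map (fun x => x - 1)) w ∧ Avoids212 w ∧
        Avoids312 w ∧ ascents w = k - 1} := by
  set t := s.map (· - 1)
  have ht : ∀ x ∈ t, 0 < x := fun _ hx => by
    obtain ⟨x, hxs, rfl⟩ := List.mem_map.1 hx
    have := hs x hxs
    omega
  have hdyck (μ : List ℕ) : IsDyck s μ ↔ DominatedBy μ t :=
    isDyck_iff_dominatedBy fun x hx => (hs x hx).trans' one_le_two
  have hmaps (w : List ℕ) (hw : IsSPerm t w ∧ Avoids212 w ∧ Avoids312 w ∧ ascents w = k - 1) :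
      IsDyck s (pathOfWord t.length w) ∧ peaks (pathOfWord t.length w) = k := by
    obtain ⟨hw, h212, h312, hasc⟩ := hw
    refine ⟨(hdyck _).2 (dominatedBy_pathOfWord hw), ?_⟩
    rw [peaks_pathOfWord ht hw ((avoids212_and_avoids312_iff w).1 ⟨h212, h312⟩)]
    omega
  refine (Nat.card_congr (Equiv.ofBijective (fun w => ⟨_, hmaps w.1 w.2⟩)
    ⟨fun w w' h => Subtype.ext ?_, fun μ => ?_⟩)).symm
  · exact eq_of_pathOfWord_eq w.2.1 w'.2.1
      ((avoids212_and_avoids312_iff _).1 ⟨w.2.2.1, w.2.2.2.1⟩)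
      ((avoids212_and_avoids312_iff _).1 ⟨w'.2.2.1, w'.2.2.2.1⟩) (congrArg Subtype.val h)
  · obtain ⟨w, hw, hr, hpath⟩ := exists_pathOfWord_eq ht ((hdyck _).1 μ.2.1)
    have hasc := peaks_pathOfWord ht hw hr
    rw [hpath, μ.2.2] at hasc
    obtain ⟨h212, h312⟩ := (avoids212_and_avoids312_iff w).2 hr
    exact ⟨⟨w, hw, h212, h312, by omega⟩, Subtype.ext hpath⟩
end
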